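/- arXiv:1402.1902 — 5 statements merged into one kernel-verified Lean document; each statement's English description precedes it below -/
import Mathlib

section
/- Let α, β ≥ 1 and 0 < σ ≤ min{α, β}. Then there exists a constant C > 0 (depending on α, β, σ) such that for all points x, y, z in ℝ^N with x ≠ z, (1+|y−x|)^{−α} (1+|y−z|)^{−β} ≤ C |x−z|^{−σ} ( (1+|y−x|)^{−(α+β−σ)} + (1+|y−z|)^{−(α+β−σ)} ). -/
open Real

lemma key_one (α β σ a b d : ℝ) (hσ0 : 0 < σ) (hσα : σ ≤ α)
    (ha : 1 ≤ a) (hb : 1 ≤ b) (hd : 0 < d) (hba : b ≤ a) (hdab : d ≤ a + b) :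
    a ^ (-α) * b ^ (-β) ≤ 2 ^ σ * d ^ (-σ) * b ^ (-(α + β - σ)) := by
  have ha0 : (0:ℝ) < a := lt_of_lt_of_le one_pos ha
  have hb0 : (0:ℝ) < b := lt_of_lt_of_le one_pos hb
  have step1 : a ^ (-α) * b ^ (-β) ≤ a ^ (-σ) * b ^ (-(α + β - σ)) := by
    have h1 : a ^ (σ - α) ≤ b ^ (σ - α) := by
      rw [show σ - α = -(α - σ) by ring, Real.rpow_neg ha0.le, Real.rpow_neg hb0.le]
      apply inv_anti₀
      · exact Real.rpow_pos_of_pos hb0 _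
      · exact Real.rpow_le_rpow hb0.le hba (by linarith)
    calc a ^ (-α) * b ^ (-β) = a ^ (-σ) * (a ^ (σ - α) * b ^ (-β)) := by
          rw [← mul_assoc, ← Real.rpow_add ha0]; ring_nf
      _ ≤ a ^ (-σ) * (b ^ (σ - α) * b ^ (-β)) := by
          exact mul_le_mul_of_nonneg_left
            (mul_le_mul_of_nonneg_right h1 (Real.rpow_pos_of_pos hb0 _).le)
            (Real.rpow_pos_of_pos ha0 _).le
      _ = a ^ (-σ) * b ^ (-(α + β - σ)) := by
          rw [← Real.rpow_add hb0]; ring_nf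
  have step2 : a ^ (-σ) ≤ 2 ^ σ * d ^ (-σ) := by
    have hd2 : d ≤ 2 * a := by linarith
    have h3 : a⁻¹ ≤ 2 / d := by
      rw [inv_le_iff_one_le_mul₀ ha0, div_mul_eq_mul_div, le_div_iff₀ hd]
      linarith
    calc a ^ (-σ) = (a⁻¹) ^ σ := by
          rw [Real.rpow_neg ha0.le, ← Real.inv_rpow ha0.le]
      _ ≤ (2 / d) ^ σ := Real.rpow_le_rpow (by positivity) h3 hσ0.le
      _ = 2 ^ σ * d ^ (-σ) := by
          rw [Real.div_rpow (by norm_num) hd.le, Real.rpow_neg hd.le, div_eq_mul_inv]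
  calc a ^ (-α) * b ^ (-β) ≤ a ^ (-σ) * b ^ (-(α + β - σ)) := step1
    _ ≤ (2 ^ σ * d ^ (-σ)) * b ^ (-(α + β - σ)) :=
        mul_le_mul_of_nonneg_right step2 (Real.rpow_pos_of_pos hb0 _).le
    _ = 2 ^ σ * d ^ (-σ) * b ^ (-(α + β - σ)) := by ring

theorem stmt0 (N : ℕ) (α β σ : ℝ) (hα : 1 ≤ α) (hβ : 1 ≤ β)
    (hσ0 : 0 < σ) (hσ : σ ≤ min α β) :
    ∃ C > 0, ∀ x y z : EuclideanSpace ℝ (Fin N), x ≠ z →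
      (1 + ‖y - x‖) ^ (-α) * (1 + ‖y - z‖) ^ (-β) ≤
        C * ‖x - z‖ ^ (-σ) *
          ((1 + ‖y - x‖) ^ (-(α + β - σ)) + (1 + ‖y - z‖) ^ (-(α + β - σ))) := by
  obtain ⟨hσα, hσβ⟩ := le_min_iff.mp hσ
  refine ⟨2 ^ σ, Real.rpow_pos_of_pos two_pos σ, ?_⟩
  intro x y z hxz
  set a := 1 + ‖y - x‖ with ha'
  set b := 1 + ‖y - z‖ with hb'
  have ha : (1:ℝ) ≤ a := le_add_of_nonneg_right (norm_nonneg _)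
  have hb : (1:ℝ) ≤ b := le_add_of_nonneg_right (norm_nonneg _)
  have ha0 : (0:ℝ) < a := lt_of_lt_of_le one_pos ha
  have hb0 : (0:ℝ) < b := lt_of_lt_of_le one_pos hb
  have hd : 0 < ‖x - z‖ := norm_sub_pos_iff.mpr hxz
  have hdab : ‖x - z‖ ≤ a + b := by
    have h1 : x - z = (y - z) - (y - x) := by abel
    calc ‖x - z‖ = ‖(y - z) - (y - x)‖ := by rw [h1]
      _ ≤ ‖y - z‖ + ‖y - x‖ := norm_sub_le _ _
      _ ≤ a + b := by rw [ha', hb']; linarith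
  have hpos : 0 ≤ 2 ^ σ * ‖x - z‖ ^ (-σ) := by positivity
  rcases le_total b a with h | h
  · calc a ^ (-α) * b ^ (-β) ≤ 2 ^ σ * ‖x - z‖ ^ (-σ) * b ^ (-(α + β - σ)) :=
        key_one α β σ a b _ hσ0 hσα ha hb hd h hdab
      _ ≤ 2 ^ σ * ‖x - z‖ ^ (-σ) * (a ^ (-(α + β - σ)) + b ^ (-(α + β - σ))) := by
        apply mul_le_mul_of_nonneg_left _ hpos
        exact le_add_of_nonneg_left (Real.rpow_pos_of_pos ha0 _).le
  · have := key_one β α σ b a ‖x - z‖ hσ0 hσβ hb ha hd h (by linarith)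
    calc a ^ (-α) * b ^ (-β) = b ^ (-β) * a ^ (-α) := by ring
      _ ≤ 2 ^ σ * ‖x - z‖ ^ (-σ) * a ^ (-(β + α - σ)) := this
      _ = 2 ^ σ * ‖x - z‖ ^ (-σ) * a ^ (-(α + β - σ)) := by ring_nf
      _ ≤ 2 ^ σ * ‖x - z‖ ^ (-σ) * (a ^ (-(α + β - σ)) + b ^ (-(α + β - σ))) := by
        apply mul_le_mul_of_nonneg_left _ hpos
        exact le_add_of_nonneg_right (Real.rpow_pos_of_pos hb0 _).le
end

section
/- Suppose U : ℝ^N → ℝ satisfies 0 < U(x) ≤ C₂/(1 + |x|^{N+2s}) for all x, where 0 < s < 1 and C₂ > 0. Fix η ∈ (1, N+2s], k ≥ 2, r > 0, and define x^i and Ω_1 as for the regular k-gon configuration of radius r. Then there is a constant C > 0 (independent of k, r) such that for all x ∈ Ω_1, Σ_{i=2}^k U(x − x^i) ≤ C (1+|x−x^1|)^{−(N+2s−η)} k^η / r^η ≤ C k^η / r^η. -/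
open Real Finset

noncomputable def kgon (N k : ℕ) (r : ℝ) (i : ℕ) : EuclideanSpace ℝ (Fin N) :=
  WithLp.toLp 2 (fun (j : Fin N) => if (j : ℕ) = 0 then r * Real.cos (2 * ((i : ℝ) - 1) * Real.pi / k)
    else if (j : ℕ) = 1 then r * Real.sin (2 * ((i : ℝ) - 1) * Real.pi / k) else 0)

def sector (N k : ℕ) (h0 : 0 < N) (h1 : 1 < N) : Set (EuclideanSpace ℝ (Fin N)) :=
  {x | 0 < Real.sqrt ((x ⟨0, h0⟩) ^ 2 + (x ⟨1, h1⟩) ^ 2) ∧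
    Real.cos (Real.pi / k) ≤ x ⟨0, h0⟩ / Real.sqrt ((x ⟨0, h0⟩) ^ 2 + (x ⟨1, h1⟩) ^ 2)}


lemma trig_key (k j : ℕ) (hk : 2 ≤ k) (hj1 : 1 ≤ j) (hjk : j + 1 ≤ k) :
    Real.sin (π/k) * |Real.sin (2*(j:ℝ)*π/k)| ≤ Real.cos (π/k) * (1 - Real.cos (2*(j:ℝ)*π/k)) := by
  have hkpos : (0:ℝ) < k := by positivity
  have hk2 : (2:ℝ) ≤ k := by exact_mod_cast hk
  have hpik : 0 < π/k := by positivity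
  have hpik2 : π/k ≤ π/2 := by
    rw [div_le_div_iff₀ hkpos (by norm_num)]
    nlinarith [Real.pi_pos]
  set h : ℝ := (j:ℝ)*π/k with hh
  have hjk' : (j:ℝ) + 1 ≤ k := by exact_mod_cast hjk
  have hj1' : (1:ℝ) ≤ j := by exact_mod_cast hj1
  have hhlo : π/k ≤ h := by
    rw [hh, div_le_div_iff₀ hkpos hkpos]
    nlinarith [Real.pi_pos, mul_nonneg (mul_nonneg Real.pi_pos.le hkpos.le) (by linarith : (0:ℝ) ≤ (j:ℝ) - 1)]
  have hhhi : h ≤ π - π/k := by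
    have e : π - π/k = ((k:ℝ)-1)*π/k := by field_simp
    rw [hh, e, div_le_div_iff₀ hkpos hkpos]
    nlinarith [Real.pi_pos, mul_nonneg (mul_nonneg Real.pi_pos.le hkpos.le) (by linarith : (0:ℝ) ≤ (k:ℝ) - 1 - j)]
  have hhpos : 0 < h := lt_of_lt_of_le hpik hhlo
  have hhpi : h ≤ π := by nlinarith
  have hsinh : 0 ≤ Real.sin h := Real.sin_nonneg_of_nonneg_of_le_pi hhpos.le hhpi
  have h2 : 2*(j:ℝ)*π/k = 2*h := by rw [hh]; ring
  rw [h2, Real.sin_two_mul, Real.cos_two_mul]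
  have key : Real.sin (π/k) * |Real.cos h| ≤ Real.cos (π/k) * Real.sin h := by
    rcases le_or_gt 0 (Real.cos h) with hc | hc
    · rw [abs_of_nonneg hc]
      have : 0 ≤ Real.sin (h - π/k) := by
        apply Real.sin_nonneg_of_nonneg_of_le_pi <;> linarith
      rw [Real.sin_sub] at this
      linarith
    · rw [abs_of_neg hc]
      have : 0 ≤ Real.sin (h + π/k) := by
        apply Real.sin_nonneg_of_nonneg_of_le_pi <;> linarith
      rw [Real.sin_add] at this
      linarith
  have hs1 : Real.sin h * |Real.cos h| ≥ 0 := by positivity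
  have habs : Real.sin h * Real.cos h ≤ Real.sin h * |Real.cos h| := by
    have := le_abs_self (Real.cos h)
    nlinarith
  have hsq : Real.sin h ^ 2 + Real.cos h ^ 2 = 1 := Real.sin_sq_add_cos_sq h
  rw [abs_mul, abs_mul, abs_of_nonneg (by norm_num : (0:ℝ) ≤ 2), abs_of_nonneg hsinh]
  have hcos : 0 ≤ Real.cos (π/k) := Real.cos_nonneg_of_mem_Icc ⟨by linarith, hpik2⟩
  nlinarith [mul_le_mul_of_nonneg_left key (by positivity : (0:ℝ) ≤ 2*Real.sin h), hsq, hcos]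


lemma dot_nonneg (k j : ℕ) (hk : 2 ≤ k) (hj1 : 1 ≤ j) (hjk : j + 1 ≤ k)
    (v1 v2 : ℝ) (hρ : 0 < Real.sqrt (v1^2+v2^2))
    (hv : Real.cos (π/k) ≤ v1 / Real.sqrt (v1^2+v2^2)) :
    0 ≤ v1 * (1 - Real.cos (2*(j:ℝ)*π/k)) - v2 * Real.sin (2*(j:ℝ)*π/k) := by
  have key := trig_key k j hk hj1 hjk
  set ρ := Real.sqrt (v1^2+v2^2) with hρdef
  have hρsq : ρ^2 = v1^2+v2^2 := Real.sq_sqrt (by positivity)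
  have hkpos : (0:ℝ) < k := by positivity
  have hpik : 0 < π/k := by positivity
  have hpik2 : π/k ≤ π/2 := by
    rw [div_le_div_iff₀ hkpos (by norm_num)]
    nlinarith [Real.pi_pos, mul_nonneg Real.pi_pos.le (by
      have : (2:ℝ) ≤ k := by exact_mod_cast hk
      linarith : (0:ℝ) ≤ (k:ℝ)-2)]
  have hcos : 0 ≤ Real.cos (π/k) := Real.cos_nonneg_of_mem_Icc ⟨by linarith, hpik2⟩
  have hsin : 0 ≤ Real.sin (π/k) := Real.sin_nonneg_of_nonneg_of_le_pi hpik.le (by linarith [Real.pi_pos])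
  have hv1 : ρ * Real.cos (π/k) ≤ v1 := by
    rw [le_div_iff₀ hρ] at hv; linarith [hv]
  have hv10 : 0 ≤ v1 := le_trans (by positivity) hv1
  have hsqpk : Real.sin (π/k)^2 + Real.cos (π/k)^2 = 1 := Real.sin_sq_add_cos_sq _
  have hv2 : |v2| ≤ ρ * Real.sin (π/k) := by
    have h1 : v2^2 ≤ (ρ * Real.sin (π/k))^2 := by
      nlinarith [mul_nonneg (sub_nonneg.mpr hv1) (add_nonneg hv10 (mul_nonneg hρ.le hcos))]
    calc |v2| = Real.sqrt (v2^2) := (Real.sqrt_sq_eq_abs v2).symm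
    _ ≤ Real.sqrt ((ρ * Real.sin (π/k))^2) := Real.sqrt_le_sqrt h1
    _ = ρ * Real.sin (π/k) := Real.sqrt_sq (by positivity)
  set c := Real.cos (2*(j:ℝ)*π/k)
  set sn := Real.sin (2*(j:ℝ)*π/k)
  have hc1 : c ≤ 1 := Real.cos_le_one _
  have habs2 : -v2 * sn ≥ -(|v2| * |sn|) := by
    rw [neg_mul]
    have := abs_mul v2 sn
    nlinarith [le_abs_self (v2*sn), neg_abs_le (v2*sn)]
  have hsabs : |v2| * |sn| ≤ ρ * Real.sin (π/k) * |sn| := by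
    apply mul_le_mul_of_nonneg_right hv2 (abs_nonneg _)
  have hkey2 : ρ * (Real.sin (π/k) * |sn|) ≤ ρ * (Real.cos (π/k) * (1 - c)) :=
    mul_le_mul_of_nonneg_left key hρ.le
  have hv1c : ρ * Real.cos (π/k) * (1-c) ≤ v1 * (1-c) :=
    mul_le_mul_of_nonneg_right hv1 (by linarith)
  nlinarith [habs2, hsabs, hkey2, hv1c]

lemma norm_sq_split {N : ℕ} (hN : 2 ≤ N) (y : EuclideanSpace ℝ (Fin N)) :
    ‖y‖^2 = (y ⟨0, by linarith⟩)^2 + (y ⟨1, by linarith⟩)^2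
      + ∑ j ∈ Finset.univ.filter (fun j : Fin N => 2 ≤ (j:ℕ)), (y j)^2 := by
  rw [EuclideanSpace.norm_eq, Real.sq_sqrt (by positivity)]
  have huniv : (Finset.univ : Finset (Fin N)) =
      insert ⟨0, by linarith⟩ (insert ⟨1, by linarith⟩
        (Finset.univ.filter (fun j : Fin N => 2 ≤ (j:ℕ)))) := by
    ext j
    simp only [Finset.mem_univ, Finset.mem_insert, Finset.mem_filter, true_and, true_iff,
      Fin.ext_iff]
    omega
  conv_lhs => rw [huniv]
  rw [Finset.sum_insert (by simp [Fin.ext_iff]), Finset.sum_insert (by simp [Fin.ext_iff])]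
  simp only [Real.norm_eq_abs, sq_abs]
  ring

lemma kgon_tail {N k : ℕ} (r : ℝ) (i : ℕ) {j : Fin N} (hj : 2 ≤ (j:ℕ)) :
    kgon N k r i j = 0 := by
  simp only [kgon, PiLp.toLp_apply]
  rw [if_neg (by omega), if_neg (by omega)]

lemma sub_apply' {N : ℕ} (x y : EuclideanSpace ℝ (Fin N)) (j : Fin N) :
    (x - y) j = x j - y j := rfl

set_option maxHeartbeats 1000000 in
lemma key_norms {N k : ℕ} (hN : 2 ≤ N) (hk : 2 ≤ k) {r : ℝ} (hr : 0 < r)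
    {x : EuclideanSpace ℝ (Fin N)} (hx : x ∈ sector N k (by linarith) (by linarith))
    {i : ℕ} (hi1 : 2 ≤ i) (hik : i ≤ k) :
    ‖x - kgon N k r 1‖ ≤ ‖x - kgon N k r i‖ ∧
      r * Real.sin (((i:ℝ)-1) * π / k) ≤ ‖x - kgon N k r i‖ := by
  have h0 : 0 < N := by omega
  have h1 : 1 < N := by omega
  obtain ⟨hρ, hv⟩ := hx
  set v1 : ℝ := x ⟨0, h0⟩ with hv1def
  set v2 : ℝ := x ⟨1, h1⟩ with hv2def
  set θ : ℝ := 2 * ((i:ℝ) - 1) * π / k with hθdef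
  have hcast : ((i-1:ℕ):ℝ) = (i:ℝ) - 1 := by
    push_cast [Nat.cast_sub (by omega : 1 ≤ i)]; ring
  have dot : 0 ≤ v1 * (1 - Real.cos θ) - v2 * Real.sin θ := by
    have := dot_nonneg k (i-1) hk (by omega) (by omega) v1 v2 hρ hv
    rwa [hcast, ← hθdef] at this
  set T : ℝ := ∑ j ∈ Finset.univ.filter (fun j : Fin N => 2 ≤ (j:ℕ)), (x j)^2 with hT
  have tail : ∀ m : ℕ, ∑ j ∈ Finset.univ.filter (fun j : Fin N => 2 ≤ (j:ℕ)),
      ((x - kgon N k r m) j)^2 = T := by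
    intro m
    apply Finset.sum_congr rfl
    intro j hj
    rw [sub_apply', kgon_tail r m (by simpa using hj), sub_zero]
  have ca : ∀ m : ℕ, (x - kgon N k r m) ⟨0, h0⟩
      = v1 - r * Real.cos (2 * ((m:ℝ) - 1) * π / k) := by
    intro m; rw [sub_apply']; simp [kgon]; rfl
  have cb : ∀ m : ℕ, (x - kgon N k r m) ⟨1, h1⟩
      = v2 - r * Real.sin (2 * ((m:ℝ) - 1) * π / k) := by
    intro m; rw [sub_apply']; simp [kgon]; rfl
  have hA : ‖x - kgon N k r i‖^2 = (v1 - r * Real.cos θ)^2 + (v2 - r * Real.sin θ)^2 + T := by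
    rw [norm_sq_split hN, ca i, cb i, tail i, hθdef]
  have hB : ‖x - kgon N k r 1‖^2 = (v1 - r)^2 + v2^2 + T := by
    rw [norm_sq_split hN, ca 1, cb 1, tail 1]
    norm_num
  have hpyth := Real.sin_sq_add_cos_sq θ
  have claim1 : ‖x - kgon N k r 1‖^2 ≤ ‖x - kgon N k r i‖^2 := by
    have e : (v1 - r * Real.cos θ)^2 + (v2 - r * Real.sin θ)^2
        = (v1 - r)^2 + v2^2 + 2*r*(v1*(1 - Real.cos θ) - v2 * Real.sin θ)
          + r^2*(Real.sin θ^2 + Real.cos θ^2) - r^2 := by ring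
    rw [hpyth] at e
    rw [hA, hB, e]
    linarith [mul_nonneg hr.le dot]
  have conc1 : ‖x - kgon N k r 1‖ ≤ ‖x - kgon N k r i‖ := by
    have h1 := Real.sqrt_le_sqrt claim1
    rwa [Real.sqrt_sq (norm_nonneg _), Real.sqrt_sq (norm_nonneg _)] at h1
  refine ⟨conc1, ?_⟩
  set u : ℝ := ((i:ℝ) - 1) * π / k with hudef
  have hkpos : (0:ℝ) < k := by positivity
  have hi1' : (1:ℝ) ≤ (i:ℝ) - 1 := by
    have : (2:ℝ) ≤ i := by exact_mod_cast hi1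
    linarith
  have hik' : (i:ℝ) - 1 ≤ (k:ℝ) - 1 := by
    have : (i:ℝ) ≤ k := by exact_mod_cast hik
    linarith
  have hu0 : 0 < u := by
    rw [hudef]; positivity
  have hupi : u ≤ π := by
    rw [hudef, div_le_iff₀ hkpos]
    nlinarith [Real.pi_pos]
  have hsinu : 0 ≤ Real.sin u := Real.sin_nonneg_of_nonneg_of_le_pi hu0.le hupi
  have hθu : θ = 2 * u := by rw [hθdef, hudef]; ring
  have hC : ‖kgon N k r i - kgon N k r 1‖^2 = (2 * r * Real.sin u)^2 := by
    rw [norm_sq_split hN]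
    have t0 : (kgon N k r i - kgon N k r 1) ⟨0, h0⟩ = r * Real.cos θ - r := by
      rw [sub_apply']; simp [kgon, hθdef]
    have t1 : (kgon N k r i - kgon N k r 1) ⟨1, h1⟩ = r * Real.sin θ := by
      rw [sub_apply']; simp [kgon, hθdef]
    have t2 : ∑ j ∈ Finset.univ.filter (fun j : Fin N => 2 ≤ (j:ℕ)),
        ((kgon N k r i - kgon N k r 1) j)^2 = 0 := by
      apply Finset.sum_eq_zero
      intro j hj
      rw [sub_apply', kgon_tail r i (by simpa using hj), kgon_tail r 1 (by simpa using hj)]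
      norm_num
    rw [t0, t1, t2, add_zero]
    have hcos2 : Real.cos θ = 1 - 2 * Real.sin u ^ 2 := by
      rw [hθu, Real.cos_two_mul]
      nlinarith [Real.sin_sq_add_cos_sq u]
    rw [hcos2, hθu, Real.sin_two_mul]
    linear_combination 4*r^2*Real.sin u^2 * (Real.sin_sq_add_cos_sq u)
  have hCnorm : ‖kgon N k r i - kgon N k r 1‖ = 2 * r * Real.sin u := by
    have h1 := congrArg Real.sqrt hC
    rwa [Real.sqrt_sq (norm_nonneg _), Real.sqrt_sq (by positivity)] at h1
  have htri : ‖kgon N k r i - kgon N k r 1‖ ≤ ‖x - kgon N k r i‖ + ‖x - kgon N k r 1‖ := by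
    have := dist_triangle (kgon N k r i) x (kgon N k r 1)
    simpa [dist_eq_norm, norm_sub_rev (kgon N k r i) x] using this
  rw [hCnorm] at htri
  linarith


set_option maxHeartbeats 1000000 in
theorem stmt4 (N : ℕ) (hN : 2 ≤ N) (s : ℝ) (hs : 0 < s) (hs1 : s < 1)
    (C₂ : ℝ) (hC₂ : 0 < C₂) (U : EuclideanSpace ℝ (Fin N) → ℝ)
    (hU : ∀ x, 0 < U x ∧ U x ≤ C₂ / (1 + ‖x‖ ^ ((N : ℝ) + 2 * s)))
    (η : ℝ) (hη1 : 1 < η) (hη2 : η ≤ (N : ℝ) + 2 * s) :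
    ∃ C > (0 : ℝ), ∀ k : ℕ, 2 ≤ k → ∀ r : ℝ, 0 < r →
      ∀ x ∈ sector N k (by omega) (by omega),
        (∑ i ∈ Finset.Icc 2 k, U (x - kgon N k r i)) ≤
            C * (1 + ‖x - kgon N k r 1‖) ^ (-((N : ℝ) + 2 * s - η)) * (k : ℝ) ^ η / r ^ η ∧
        C * (1 + ‖x - kgon N k r 1‖) ^ (-((N : ℝ) + 2 * s - η)) * (k : ℝ) ^ η / r ^ η ≤
            C * (k : ℝ) ^ η / r ^ η := by
  have hN' : (2:ℝ) ≤ N := by exact_mod_cast hN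
  set p : ℝ := (N:ℝ) + 2 * s with hp
  have hp0 : 0 < p := by rw [hp]; nlinarith
  have hη0 : 0 < η := by linarith
  have hsummable : Summable (fun n : ℕ => (n:ℝ)^(-η)) := by
    have h := Real.summable_one_div_nat_rpow.mpr hη1
    refine h.congr ?_
    intro n
    rw [Real.rpow_neg (Nat.cast_nonneg n), one_div]
  set Z : ℝ := ∑' n : ℕ, (n:ℝ)^(-η) with hZdef
  have hZ1 : 1 ≤ Z := by
    have h := Summable.le_tsum hsummable 1 (fun j _ => Real.rpow_nonneg (Nat.cast_nonneg j) _)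
    simpa using h
  have h2p : (0:ℝ) < 2^p := Real.rpow_pos_of_pos (by norm_num) p
  refine ⟨C₂ * 2^p * (2*Z), by positivity, ?_⟩
  intro k hk r hr x hx
  have hkpos : (0:ℝ) < k := by positivity
  set d : ℝ := ‖x - kgon N k r 1‖ with hd
  have hd0 : 0 ≤ d := norm_nonneg _
  set A : ℝ := (1 + d)^(-(p-η)) with hA
  have hA0 : 0 ≤ A := Real.rpow_nonneg (by linarith) _
  have hA1 : A ≤ 1 := Real.rpow_le_one_of_one_le_of_nonpos (by linarith) (by linarith)
  have hrη : (0:ℝ) < r^η := Real.rpow_pos_of_pos hr η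
  have hkη : (0:ℝ) < (k:ℝ)^η := Real.rpow_pos_of_pos hkpos η
  constructor
  · -- main bound
    have main : ∀ i ∈ Finset.Icc 2 k, U (x - kgon N k r i)
        ≤ C₂ * 2^p * A * (r * Real.sin (((i:ℝ)-1)*π/k))^(-η) := by
      intro i hi
      rw [Finset.mem_Icc] at hi
      obtain ⟨hdt, hmt⟩ := key_norms hN hk hr hx hi.1 hi.2
      set t : ℝ := ‖x - kgon N k r i‖ with ht
      set u : ℝ := ((i:ℝ)-1)*π/k with hu
      have hi1' : (1:ℝ) ≤ (i:ℝ) - 1 := by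
        have : (2:ℝ) ≤ i := by exact_mod_cast hi.1
        linarith
      have hik' : (i:ℝ) - 1 ≤ (k:ℝ) - 1 := by
        have : (i:ℝ) ≤ k := by exact_mod_cast hi.2
        linarith
      have hu0 : 0 < u := by rw [hu]; positivity
      have hupi : u < π := by
        rw [hu, div_lt_iff₀ hkpos]
        nlinarith [Real.pi_pos]
      have hsinu : 0 < Real.sin u := Real.sin_pos_of_pos_of_lt_pi hu0 hupi
      set m : ℝ := r * Real.sin u with hm
      have hm0 : 0 < m := by positivity
      have ht0 : 0 ≤ t := norm_nonneg _
      have h1t : (0:ℝ) < 1 + t := by linarith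
      have hUb := (hU (x - kgon N k r i)).2
      have step1 : (1+t)^p ≤ 2^p * (1 + t^p) := by
        have hmax : (1:ℝ) + t ≤ 2 * max 1 t := by
          have h1 := le_max_left (1:ℝ) t
          have h2 := le_max_right (1:ℝ) t
          linarith
        have e1 : ((2:ℝ) * max 1 t)^p = 2^p * (max 1 t)^p :=
          Real.mul_rpow (by norm_num) (le_trans zero_le_one (le_max_left 1 t))
        have e2 : (max 1 t)^p ≤ 1 + t^p := by
          rcases le_total t 1 with h | h
          · rw [max_eq_left h, Real.one_rpow]
            have := Real.rpow_nonneg ht0 p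
            linarith
          · rw [max_eq_right h]
            have : (0:ℝ) ≤ 1 := zero_le_one
            linarith [Real.rpow_nonneg ht0 p]
        calc (1+t)^p ≤ (2 * max 1 t)^p :=
              Real.rpow_le_rpow (by linarith) hmax hp0.le
        _ = 2^p * (max 1 t)^p := e1
        _ ≤ 2^p * (1 + t^p) := by nlinarith
      have htp0 : (0:ℝ) < 1 + t^p := by
        have := Real.rpow_nonneg ht0 p
        linarith
      have b1 : C₂ / (1 + t^p) ≤ C₂ * 2^p * (1+t)^(-p) := by
        rw [Real.rpow_neg h1t.le, ← div_eq_mul_inv]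
        rw [div_le_div_iff₀ htp0 (Real.rpow_pos_of_pos h1t p)]
        calc C₂ * (1+t)^p ≤ C₂ * (2^p * (1 + t^p)) :=
              mul_le_mul_of_nonneg_left step1 hC₂.le
        _ = C₂ * 2^p * (1 + t^p) := by ring
      have b2 : (1+t)^(-p) = (1+t)^(-(p-η)) * (1+t)^(-η) := by
        rw [← Real.rpow_add h1t]
        ring_nf
      have b3 : (1+t)^(-(p-η)) ≤ A := by
        rw [hA]
        exact Real.rpow_le_rpow_of_nonpos (by linarith) (by linarith) (by linarith)
      have b4 : (1+t)^(-η) ≤ m^(-η) :=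
        Real.rpow_le_rpow_of_nonpos hm0 (by linarith) (by linarith)
      have hfin : C₂ * 2^p * (1+t)^(-p) ≤ C₂ * 2^p * A * m^(-η) := by
        rw [b2]
        have h5 : (1+t)^(-(p-η)) * (1+t)^(-η) ≤ A * m^(-η) := by
          apply mul_le_mul b3 b4 (Real.rpow_nonneg h1t.le _) hA0
        calc C₂ * 2^p * ((1+t)^(-(p-η)) * (1+t)^(-η)) ≤ C₂ * 2^p * (A * m^(-η)) :=
              mul_le_mul_of_nonneg_left h5 (by positivity)
        _ = C₂ * 2^p * A * m^(-η) := by ring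
      calc U (x - kgon N k r i) ≤ C₂ / (1 + t^p) := hUb
      _ ≤ C₂ * 2^p * (1+t)^(-p) := b1
      _ ≤ C₂ * 2^p * A * m^(-η) := hfin
    have sinbound : ∀ i ∈ Finset.Icc 2 k,
        (r * Real.sin (((i:ℝ)-1)*π/k))^(-η)
          ≤ r^(-η) * ((2/(k:ℝ))^(-η) * (((i-1:ℕ):ℝ)^(-η) + ((k+1-i:ℕ):ℝ)^(-η))) := by
      intro i hi
      rw [Finset.mem_Icc] at hi
      have hcast1 : ((i-1:ℕ):ℝ) = (i:ℝ) - 1 := by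
        push_cast [Nat.cast_sub (by omega : 1 ≤ i)]; ring
      have hcast2 : ((k+1-i:ℕ):ℝ) = (k:ℝ) + 1 - i := by
        push_cast [Nat.cast_sub (by omega : i ≤ k+1)]; ring
      set u : ℝ := ((i:ℝ)-1)*π/k with hu
      have hi1' : (1:ℝ) ≤ (i:ℝ) - 1 := by
        have : (2:ℝ) ≤ i := by exact_mod_cast hi.1
        linarith
      have hik' : (i:ℝ) - 1 ≤ (k:ℝ) - 1 := by
        have : (i:ℝ) ≤ k := by exact_mod_cast hi.2
        linarith
      have hu0 : 0 < u := by rw [hu]; positivity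
      have hupi : u < π := by
        rw [hu, div_lt_iff₀ hkpos]
        nlinarith [Real.pi_pos]
      have hsinu : 0 < Real.sin u := Real.sin_pos_of_pos_of_lt_pi hu0 hupi
      rw [Real.mul_rpow hr.le hsinu.le]
      have two_cases : (2/(k:ℝ))*((i:ℝ)-1) ≤ Real.sin u ∨ (2/(k:ℝ))*((k:ℝ)+1-i) ≤ Real.sin u := by
        rcases le_total (2*((i:ℕ):ℝ)-2) (k:ℝ) with hcase | hcase
        · left
          have hu2 : u ≤ π/2 := by
            rw [hu, div_le_div_iff₀ hkpos (by norm_num)]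
            nlinarith [Real.pi_pos]
          have := Real.mul_le_sin hu0.le hu2
          have heq : 2/π * u = 2/(k:ℝ)*((i:ℝ)-1) := by
            rw [hu]; field_simp
          linarith [heq ▸ this]
        · right
          have hv0 : 0 ≤ π - u := by linarith
          have hv2 : π - u ≤ π/2 := by
            have h : π/2 ≤ u := by
              rw [hu, le_div_iff₀ hkpos]
              nlinarith [Real.pi_pos, mul_nonneg Real.pi_pos.le (by linarith : (0:ℝ) ≤ 2*(i:ℝ)-2-(k:ℝ))]
            linarith
          have hms := Real.mul_le_sin hv0 hv2
          rw [Real.sin_pi_sub] at hms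
          have heq : 2/π * (π - u) = 2/(k:ℝ)*((k:ℝ)+1-i) := by
            rw [hu]; field_simp
            ring
          linarith [heq ▸ hms]
      have hterm : Real.sin u^(-η) ≤ (2/(k:ℝ))^(-η) * (((i-1:ℕ):ℝ)^(-η) + ((k+1-i:ℕ):ℝ)^(-η)) := by
        rcases two_cases with hc | hc
        · have hw0 : (0:ℝ) < 2/(k:ℝ)*((i:ℝ)-1) := by positivity
          have h1 : Real.sin u^(-η) ≤ (2/(k:ℝ)*((i:ℝ)-1))^(-η) :=
            Real.rpow_le_rpow_of_nonpos hw0 hc (by linarith)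
          have h2 : (2/(k:ℝ)*((i:ℝ)-1))^(-η) = (2/(k:ℝ))^(-η) * ((i:ℝ)-1)^(-η) :=
            Real.mul_rpow (by positivity) (by linarith)
          have h3 : (0:ℝ) ≤ ((k+1-i:ℕ):ℝ)^(-η) := Real.rpow_nonneg (Nat.cast_nonneg _) _
          rw [hcast1]
          have h4 : (0:ℝ) ≤ (2/(k:ℝ))^(-η) := Real.rpow_nonneg (by positivity) _
          nlinarith [mul_nonneg h4 h3]
        · have hki : (1:ℝ) ≤ (k:ℝ) + 1 - i := by
            have : (i:ℝ) ≤ k := by exact_mod_cast hi.2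
            linarith
          have hw0 : (0:ℝ) < 2/(k:ℝ)*((k:ℝ)+1-i) := by positivity
          have h1 : Real.sin u^(-η) ≤ (2/(k:ℝ)*((k:ℝ)+1-i))^(-η) :=
            Real.rpow_le_rpow_of_nonpos hw0 hc (by linarith)
          have h2 : (2/(k:ℝ)*((k:ℝ)+1-i))^(-η) = (2/(k:ℝ))^(-η) * ((k:ℝ)+1-i)^(-η) :=
            Real.mul_rpow (by positivity) (by linarith)
          have h3 : (0:ℝ) ≤ ((i-1:ℕ):ℝ)^(-η) := Real.rpow_nonneg (Nat.cast_nonneg _) _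
          rw [hcast2]
          have h4 : (0:ℝ) ≤ (2/(k:ℝ))^(-η) := Real.rpow_nonneg (by positivity) _
          nlinarith [mul_nonneg h4 h3]
      have hs0 : (0:ℝ) ≤ Real.sin u^(-η) := Real.rpow_nonneg hsinu.le _
      have hr0 : (0:ℝ) ≤ r^(-η) := Real.rpow_nonneg hr.le _
      exact mul_le_mul_of_nonneg_left hterm hr0
    have himg : ∀ g : ℕ → ℕ, (∀ a ∈ Finset.Icc 2 k, ∀ b ∈ Finset.Icc 2 k, g a = g b → a = b) →
        ∑ i ∈ Finset.Icc 2 k, ((g i : ℕ):ℝ)^(-η) ≤ Z := by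
      intro g hg
      have himage : ∑ j ∈ (Finset.Icc 2 k).image g, ((j:ℕ):ℝ)^(-η)
          = ∑ i ∈ Finset.Icc 2 k, ((g i : ℕ):ℝ)^(-η) := Finset.sum_image hg
      rw [← himage]
      exact hsummable.sum_le_tsum _ (fun j _ => Real.rpow_nonneg (Nat.cast_nonneg j) _)
    have hsum1 : ∑ i ∈ Finset.Icc 2 k, ((i-1:ℕ):ℝ)^(-η) ≤ Z := by
      apply himg (fun i => i - 1)
      intro a ha b hb hab
      rw [Finset.mem_Icc] at ha hb
      omega
    have hsum2 : ∑ i ∈ Finset.Icc 2 k, ((k+1-i:ℕ):ℝ)^(-η) ≤ Z := by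
      apply himg (fun i => k + 1 - i)
      intro a ha b hb hab
      rw [Finset.mem_Icc] at ha hb
      omega
    have hsplit : (2/(k:ℝ))^(-η) ≤ (k:ℝ)^η := by
      have h21 : (2:ℝ)^(-η) ≤ 1 := Real.rpow_le_one_of_one_le_of_nonpos one_le_two (by linarith)
      have h20 : (0:ℝ) ≤ (2:ℝ)^(-η) := Real.rpow_nonneg (by norm_num) _
      have e : (2/(k:ℝ))^(-η) = (2:ℝ)^(-η) * (k:ℝ)^η := by
        rw [Real.div_rpow (by norm_num) hkpos.le, Real.rpow_neg hkpos.le]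
        field_simp
      rw [e]
      nlinarith [hkη]
    have hB0 : (0:ℝ) ≤ (2/(k:ℝ))^(-η) := Real.rpow_nonneg (by positivity) _
    calc ∑ i ∈ Finset.Icc 2 k, U (x - kgon N k r i)
        ≤ ∑ i ∈ Finset.Icc 2 k, C₂ * 2^p * A * (r * Real.sin (((i:ℝ)-1)*π/k))^(-η) :=
          Finset.sum_le_sum main
    _ ≤ ∑ i ∈ Finset.Icc 2 k,
          C₂ * 2^p * A * (r^(-η) * ((2/(k:ℝ))^(-η) * (((i-1:ℕ):ℝ)^(-η) + ((k+1-i:ℕ):ℝ)^(-η)))) := by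
          apply Finset.sum_le_sum
          intro i hi
          exact mul_le_mul_of_nonneg_left (sinbound i hi) (by positivity)
    _ = (C₂ * 2^p * A * r^(-η) * (2/(k:ℝ))^(-η)) *
          ∑ i ∈ Finset.Icc 2 k, (((i-1:ℕ):ℝ)^(-η) + ((k+1-i:ℕ):ℝ)^(-η)) := by
          rw [Finset.mul_sum]
          apply Finset.sum_congr rfl
          intro i _
          ring
    _ ≤ (C₂ * 2^p * A * r^(-η) * (2/(k:ℝ))^(-η)) * (2*Z) := by
          apply mul_le_mul_of_nonneg_left ?_ ?_
          · rw [Finset.sum_add_distrib]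
            linarith [hsum1, hsum2]
          · have : (0:ℝ) ≤ r^(-η) := Real.rpow_nonneg hr.le _
            exact mul_nonneg (mul_nonneg (mul_nonneg (by positivity) hA0) this) hB0
    _ ≤ C₂ * 2^p * (2*Z) * A * (k:ℝ)^η / r^η := by
          have e1 : C₂ * 2^p * A * r^(-η) * (2/(k:ℝ))^(-η) * (2*Z)
              = (C₂ * 2^p * (2*Z) * A * r^(-η)) * (2/(k:ℝ))^(-η) := by ring
          have e2 : C₂ * 2^p * (2*Z) * A * (k:ℝ)^η / r^η
              = (C₂ * 2^p * (2*Z) * A * r^(-η)) * (k:ℝ)^η := by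
            rw [Real.rpow_neg hr.le]
            field_simp
          rw [e1, e2]
          apply mul_le_mul_of_nonneg_left hsplit
          exact mul_nonneg (mul_nonneg (by positivity) hA0) (Real.rpow_nonneg hr.le _)
  · -- easy second bound
    calc C₂ * 2^p * (2*Z) * A * (k:ℝ)^η / r^η
        ≤ C₂ * 2^p * (2*Z) * 1 * (k:ℝ)^η / r^η := by
          gcongr
    _ = C₂ * 2^p * (2*Z) * (k:ℝ)^η / r^η := by ring
end

section
/- Let N ≥ 1, s ∈ (0,1), p > 1 with (N+2s)p > N. Suppose U, V : ℝ^N → ℝ satisfy 0 ≤ U(x) ≤ C/(1+|x|^{N+2s}) and 0 ≤ V(x) ≤ C/(1+|x|^{N+2s}). Then for points a, b ∈ ℝ^N with d = |a − b| ≥ 1 and any τ with 0 < τ < min{(N+2s)p − N, N+2s}, ∫_{ℝ^N} U(x−a)^p V(x−b) dx ≤ C' d^{−(N+2s)} for a constant C' depending only on N, s, p, τ, C. -/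
open Real MeasureTheory

lemma aux_one_add_rpow (t r : ℝ) (ht : 0 ≤ t) (hr : 0 ≤ r) :
    (1 + t) ^ r ≤ 2 ^ r * (1 + t ^ r) := by
  have h1 : (1 + t) ≤ 2 * (1 ⊔ t) := by
    rcases le_total t 1 with h | h
    · calc 1 + t ≤ 1 + 1 := by linarith
        _ ≤ 2 * (1 ⊔ t) := by have := le_max_left (1:ℝ) t; nlinarith
    · calc 1 + t ≤ t + t := by linarith
        _ = 2 * t := by ring
        _ ≤ 2 * (1 ⊔ t) := by gcongr; exact le_max_right _ _
  have h2 : (1 + t) ^ r ≤ (2 * (1 ⊔ t)) ^ r :=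
    Real.rpow_le_rpow (by linarith) h1 hr
  have h3 : (2 * (1 ⊔ t)) ^ r = 2 ^ r * (1 ⊔ t) ^ r :=
    Real.mul_rpow (by norm_num) (by positivity)
  have h4 : (1 ⊔ t) ^ r ≤ 1 + t ^ r := by
    rcases le_total t 1 with h | h
    · have : (1 ⊔ t) = 1 := by simp [h]
      rw [this, Real.one_rpow]
      have := Real.rpow_nonneg ht r
      linarith
    · have : (1 ⊔ t) = t := by simp [h]
      rw [this]; linarith
  calc (1 + t) ^ r ≤ 2 ^ r * (1 ⊔ t) ^ r := by rw [← h3]; exact h2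
    _ ≤ 2 ^ r * (1 + t ^ r) := mul_le_mul_of_nonneg_left h4 (by positivity)

lemma aux_div_bound (t r C : ℝ) (ht : 0 ≤ t) (hr : 0 ≤ r) (hC : 0 < C) :
    C / (1 + t ^ r) ≤ C * 2 ^ r * (1 + t) ^ (-r) := by
  have hpos1 : (0:ℝ) < 1 + t ^ r := by positivity
  have hpos2 : (0:ℝ) < (1 + t) ^ r := by positivity
  rw [Real.rpow_neg (by linarith), ← div_eq_mul_inv]
  rw [div_le_div_iff₀ hpos1 hpos2]
  calc C * (1 + t) ^ r ≤ C * (2 ^ r * (1 + t ^ r)) := by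
        gcongr; exact aux_one_add_rpow t r ht hr
    _ = C * 2 ^ r * (1 + t ^ r) := by ring

lemma aux_far_bound (t r d C : ℝ) (hd : 0 < d) (hr : 0 ≤ r) (ht : d / 2 ≤ t)
    (hC : 0 < C) : C / (1 + t ^ r) ≤ C * 2 ^ r * d ^ (-r) := by
  have ht0 : 0 ≤ t := le_trans (by positivity) ht
  have h1 : (d / 2) ^ r ≤ t ^ r := Real.rpow_le_rpow (by positivity) ht hr
  have h2 : (d / 2) ^ r = d ^ r / 2 ^ r := Real.div_rpow hd.le (by norm_num : (0:ℝ) ≤ 2) r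
  have hpos1 : (0:ℝ) < 1 + t ^ r := by positivity
  have hdr : (0:ℝ) < d ^ r := Real.rpow_pos_of_pos hd r
  have h2r : (0:ℝ) < (2:ℝ) ^ r := Real.rpow_pos_of_pos (by norm_num) r
  rw [Real.rpow_neg hd.le, ← div_eq_mul_inv]
  rw [div_le_div_iff₀ hpos1 hdr]
  have : d ^ r / 2 ^ r ≤ 1 + t ^ r := by rw [← h2]; linarith
  calc C * d ^ r = C * 2 ^ r * (d ^ r / 2 ^ r) := by field_simp
    _ ≤ C * 2 ^ r * (1 + t ^ r) := by gcongr

set_option maxHeartbeats 1600000 in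
theorem stmt9 (N : ℕ) (hN : 1 ≤ N) (s p C τ : ℝ) (hs : 0 < s) (hs1 : s < 1)
    (hp : 1 < p) (hpN : (N : ℝ) < ((N : ℝ) + 2 * s) * p) (hC : 0 < C)
    (hτ0 : 0 < τ) (hτ : τ < min (((N : ℝ) + 2 * s) * p - N) ((N : ℝ) + 2 * s)) :
    ∃ C' > (0 : ℝ), ∀ U V : EuclideanSpace ℝ (Fin N) → ℝ,
      (∀ x, 0 ≤ U x ∧ U x ≤ C / (1 + ‖x‖ ^ ((N : ℝ) + 2 * s))) →
      (∀ x, 0 ≤ V x ∧ V x ≤ C / (1 + ‖x‖ ^ ((N : ℝ) + 2 * s))) →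
      ∀ a b : EuclideanSpace ℝ (Fin N), 1 ≤ ‖a - b‖ →
        (∫ x, U (x - a) ^ p * V (x - b)) ≤ C' * ‖a - b‖ ^ (-((N : ℝ) + 2 * s)) := by
  set r : ℝ := (N : ℝ) + 2 * s with hr_def
  set q : ℝ := r * p with hq_def
  have hN1 : (1:ℝ) ≤ (N:ℝ) := by exact_mod_cast hN
  have hr0 : 0 < r := by simp only [hr_def]; linarith
  have hrN : (N : ℝ) < r := by simp only [hr_def]; linarith
  have hqN : (N : ℝ) < q := hpN
  have hrq : r ≤ q := by
    have h1 : r * 1 ≤ r * p := by nlinarith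
    simpa using h1
  have hq0 : 0 < q := lt_of_lt_of_le hr0 hrq
  have hfr : (Module.finrank ℝ (EuclideanSpace ℝ (Fin N)) : ℝ) = (N : ℝ) := by
    rw [finrank_euclideanSpace_fin]
  have hg1 : Integrable (fun x : EuclideanSpace ℝ (Fin N) => (1 + ‖x‖) ^ (-r)) :=
    integrable_one_add_norm (by rw [hfr]; exact hrN)
  have hg2 : Integrable (fun x : EuclideanSpace ℝ (Fin N) => (1 + ‖x‖) ^ (-q)) :=
    integrable_one_add_norm (by rw [hfr]; exact hqN)
  set I1 : ℝ := ∫ x : EuclideanSpace ℝ (Fin N), (1 + ‖x‖) ^ (-r) with hI1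
  set I2 : ℝ := ∫ x : EuclideanSpace ℝ (Fin N), (1 + ‖x‖) ^ (-q) with hI2
  have hI1nn : 0 ≤ I1 := integral_nonneg fun x => Real.rpow_nonneg (by positivity) _
  have hI2nn : 0 ≤ I2 := integral_nonneg fun x => Real.rpow_nonneg (by positivity) _
  set A : ℝ := C ^ p * 2 ^ q * (C * 2 ^ r) with hA
  set B : ℝ := C * 2 ^ r * (C * 2 ^ r) ^ p with hB
  have hApos : 0 < A := by
    have := Real.rpow_pos_of_pos hC p
    have := Real.rpow_pos_of_pos (show (0:ℝ) < 2 by norm_num) q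
    have := Real.rpow_pos_of_pos (show (0:ℝ) < 2 by norm_num) r
    positivity
  have hBpos : 0 < B := by
    have h1 : (0:ℝ) < 2 ^ r := Real.rpow_pos_of_pos (by norm_num) r
    have h2 : (0:ℝ) < (C * 2 ^ r) ^ p := Real.rpow_pos_of_pos (by positivity) p
    positivity
  refine ⟨A * I1 + B * I2 + 1, by positivity, ?_⟩
  intro U V hU hV a b hab
  set d : ℝ := ‖a - b‖ with hd_def
  have hd1 : (1:ℝ) ≤ d := hab
  have hd0 : (0:ℝ) < d := by linarith
  have hdr : (0:ℝ) < d ^ (-r) := Real.rpow_pos_of_pos hd0 _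
  set f : EuclideanSpace ℝ (Fin N) → ℝ := fun x => U (x - a) ^ p * V (x - b) with hf
  set g : EuclideanSpace ℝ (Fin N) → ℝ :=
    fun x => d ^ (-r) * (A * (1 + ‖x - b‖) ^ (-r) + B * (1 + ‖x - a‖) ^ (-q)) with hg
  have hgint : Integrable g := by
    apply Integrable.const_mul
    exact ((hg1.comp_sub_right b).const_mul A).add ((hg2.comp_sub_right a).const_mul B)
  -- pointwise bound
  have hpt : ∀ x, f x ≤ g x := by
    intro x
    have htri : d ≤ ‖x - a‖ + ‖x - b‖ := by
      calc d = ‖(x - b) - (x - a)‖ := by rw [hd_def]; congr 1; abel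
        _ ≤ ‖x - b‖ + ‖x - a‖ := norm_sub_le _ _
        _ = ‖x - a‖ + ‖x - b‖ := by ring
    have hU0 := (hU (x - a)).1
    have hUb := (hU (x - a)).2
    have hV0 := (hV (x - b)).1
    have hVb := (hV (x - b)).2
    have hterm1 : 0 ≤ A * (1 + ‖x - b‖) ^ (-r) := by positivity
    have hterm2 : 0 ≤ B * (1 + ‖x - a‖) ^ (-q) := by positivity
    rcases le_total (d / 2) ‖x - a‖ with h | h
    · -- ‖x-a‖ large
      have hUfar : U (x - a) ≤ C * 2 ^ r * d ^ (-r) :=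
        le_trans hUb (aux_far_bound _ r d C hd0 hr0.le h hC)
      have hUp : U (x - a) ^ p ≤ (C * 2 ^ r * d ^ (-r)) ^ p :=
        Real.rpow_le_rpow hU0 hUfar (by linarith)
      have hsplit : (C * 2 ^ r * d ^ (-r)) ^ p = C ^ p * (2 ^ r) ^ p * d ^ (-q) := by
        have h2r : (0:ℝ) ≤ (2:ℝ) ^ r := (Real.rpow_pos_of_pos (by norm_num) r).le
        rw [Real.mul_rpow (by positivity) hdr.le, Real.mul_rpow hC.le h2r,
          ← Real.rpow_mul hd0.le]
        congr 1
        rw [hq_def]; ring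
      have h2rp : ((2:ℝ) ^ r) ^ p = (2:ℝ) ^ q := by
        rw [← Real.rpow_mul (by norm_num), hq_def]
      have hdq : d ^ (-q) ≤ d ^ (-r) :=
        Real.rpow_le_rpow_of_exponent_le hd1 (by linarith)
      have hUp' : U (x - a) ^ p ≤ C ^ p * 2 ^ q * d ^ (-r) := by
        calc U (x - a) ^ p ≤ C ^ p * (2 ^ r) ^ p * d ^ (-q) := by rw [← hsplit]; exact hUp
          _ = C ^ p * 2 ^ q * d ^ (-q) := by rw [h2rp]
          _ ≤ C ^ p * 2 ^ q * d ^ (-r) := by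
              have : (0:ℝ) < C ^ p := Real.rpow_pos_of_pos hC p
              have : (0:ℝ) < (2:ℝ) ^ q := Real.rpow_pos_of_pos (by norm_num) q
              gcongr
      have hVnear : V (x - b) ≤ C * 2 ^ r * (1 + ‖x - b‖) ^ (-r) :=
        le_trans hVb (aux_div_bound _ r C (norm_nonneg _) hr0.le hC)
      have hfx : f x ≤ (C ^ p * 2 ^ q * d ^ (-r)) * (C * 2 ^ r * (1 + ‖x - b‖) ^ (-r)) := by
        apply mul_le_mul hUp' hVnear hV0
        positivity
      calc f x ≤ (C ^ p * 2 ^ q * d ^ (-r)) * (C * 2 ^ r * (1 + ‖x - b‖) ^ (-r)) := hfx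
        _ = d ^ (-r) * (A * (1 + ‖x - b‖) ^ (-r)) := by rw [hA]; ring
        _ ≤ g x := by
            simp only [hg]
            exact mul_le_mul_of_nonneg_left (le_add_of_nonneg_right hterm2) hdr.le
    · -- ‖x-b‖ large
      have hxb : d / 2 ≤ ‖x - b‖ := by linarith
      have hVfar : V (x - b) ≤ C * 2 ^ r * d ^ (-r) :=
        le_trans hVb (aux_far_bound _ r d C hd0 hr0.le hxb hC)
      have hUnear : U (x - a) ≤ C * 2 ^ r * (1 + ‖x - a‖) ^ (-r) :=
        le_trans hUb (aux_div_bound _ r C (norm_nonneg _) hr0.le hC)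
      have hUp : U (x - a) ^ p ≤ (C * 2 ^ r * (1 + ‖x - a‖) ^ (-r)) ^ p :=
        Real.rpow_le_rpow hU0 hUnear (by linarith)
      have hsplit : (C * 2 ^ r * (1 + ‖x - a‖) ^ (-r)) ^ p
          = (C * 2 ^ r) ^ p * (1 + ‖x - a‖) ^ (-q) := by
        have hbase : (0:ℝ) < 1 + ‖x - a‖ := by positivity
        have h2r : (0:ℝ) < (2:ℝ) ^ r := Real.rpow_pos_of_pos (by norm_num) r
        rw [Real.mul_rpow (by positivity) (Real.rpow_pos_of_pos hbase _).le,
          ← Real.rpow_mul hbase.le]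
        congr 1
        rw [hq_def]; ring
      have hfx : f x ≤ ((C * 2 ^ r) ^ p * (1 + ‖x - a‖) ^ (-q)) * (C * 2 ^ r * d ^ (-r)) := by
        refine mul_le_mul ?_ hVfar hV0 ?_
        · rw [← hsplit]; exact hUp
        · rw [← hsplit]; positivity
      calc f x ≤ ((C * 2 ^ r) ^ p * (1 + ‖x - a‖) ^ (-q)) * (C * 2 ^ r * d ^ (-r)) := hfx
        _ = d ^ (-r) * (B * (1 + ‖x - a‖) ^ (-q)) := by rw [hB]; ring
        _ ≤ g x := by
            simp only [hg]
            exact mul_le_mul_of_nonneg_left (le_add_of_nonneg_left hterm1) hdr.le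
  by_cases hfint : Integrable f
  · have hmono : ∫ x, f x ≤ ∫ x, g x := integral_mono hfint hgint hpt
    have hgval : ∫ x, g x = d ^ (-r) * (A * I1 + B * I2) := by
      rw [hg]
      rw [integral_const_mul]
      congr 1
      rw [integral_add ((hg1.comp_sub_right b).const_mul A) ((hg2.comp_sub_right a).const_mul B),
        integral_const_mul, integral_const_mul,
        integral_sub_right_eq_self (fun x => (1 + ‖x‖) ^ (-r)) b,
        integral_sub_right_eq_self (fun x => (1 + ‖x‖) ^ (-q)) a]
    calc (∫ x, U (x - a) ^ p * V (x - b)) = ∫ x, f x := rfl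
      _ ≤ ∫ x, g x := hmono
      _ = d ^ (-r) * (A * I1 + B * I2) := hgval
      _ = (A * I1 + B * I2) * d ^ (-r) := by ring
      _ ≤ (A * I1 + B * I2 + 1) * d ^ (-r) :=
          mul_le_mul_of_nonneg_right (by linarith) hdr.le
  · have hS : (0:ℝ) ≤ A * I1 + B * I2 + 1 := by
      have h1 := mul_nonneg hApos.le hI1nn
      have h2 := mul_nonneg hBpos.le hI2nn
      linarith
    calc (∫ x, U (x - a) ^ p * V (x - b)) = ∫ x, f x := rfl
      _ = 0 := integral_undef hfint
      _ ≤ (A * I1 + B * I2 + 1) * d ^ (-r) := mul_nonneg hS hdr.le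
end

section
/- Let N ≥ 1, s ∈ (0,1), p > 1 with (N+2s)p > N. Suppose U : ℝ^N → ℝ is continuous, positive, and satisfies C₁/(1+|x|^{N+2s}) ≤ U(x) ≤ C₂/(1+|x|^{N+2s}) for constants 0 < C₁ ≤ C₂. Then there exist constants 0 < c ≤ C such that for all a, b ∈ ℝ^N with |a − b| ≥ 2, c |a−b|^{−(N+2s)} ≤ ∫_{ℝ^N} U(x−a)^p U(x−b) dx ≤ C |a−b|^{−(N+2s)}. -/
open Real MeasureTheory

lemma stmt10_inv_le {a b c : ℝ} (ha : 0 < a) (hb : 0 < b) (hc : 0 < c) (h : b ≤ c * a) :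
    a⁻¹ ≤ c * b⁻¹ := by
  rw [inv_le_iff_one_le_mul₀ ha]
  calc (1:ℝ) = b * b⁻¹ := by field_simp
    _ ≤ (c * a) * b⁻¹ := by apply mul_le_mul_of_nonneg_right h (by positivity)
    _ = c * b⁻¹ * a := by ring

lemma stmt10_pow_bound {k t : ℝ} (hk : 0 ≤ k) (ht : 0 ≤ t) :
    (1 + t) ^ k ≤ 2 ^ k * (1 + t ^ k) := by
  rcases le_total t 1 with h | h
  · calc (1 + t) ^ k ≤ 2 ^ k := by
          apply Real.rpow_le_rpow (by linarith) (by linarith) hk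
        _ ≤ 2 ^ k * (1 + t ^ k) := by
          nlinarith [Real.rpow_nonneg ht k, Real.rpow_pos_of_pos (by norm_num : (0:ℝ) < 2) k]
  · calc (1 + t) ^ k ≤ (2 * t) ^ k := by
          apply Real.rpow_le_rpow (by linarith) (by linarith) hk
        _ = 2 ^ k * t ^ k := Real.mul_rpow (by norm_num) ht
        _ ≤ 2 ^ k * (1 + t ^ k) := by
          nlinarith [Real.rpow_nonneg ht k, Real.rpow_pos_of_pos (by norm_num : (0:ℝ) < 2) k]

lemma stmt10_integrable (N : ℕ) (k : ℝ) (hk : (N : ℝ) < k) :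
    Integrable (fun x : EuclideanSpace ℝ (Fin N) => (1 + ‖x‖ ^ k)⁻¹) := by
  have hk0 : 0 ≤ k := le_trans (Nat.cast_nonneg N) hk.le
  have hfin : ((Module.finrank ℝ (EuclideanSpace ℝ (Fin N)) : ℝ)) < k := by
    rw [finrank_euclideanSpace_fin]; exact hk
  refine ((integrable_one_add_norm hfin).const_mul ((2:ℝ) ^ k)).mono' ?_ ?_
  · apply Continuous.aestronglyMeasurable
    apply Continuous.inv₀
    · exact continuous_const.add (continuous_norm.rpow_const (fun x => Or.inr hk0))
    · intro x
      positivity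
  · filter_upwards with x
    have h1 : 0 < 1 + ‖x‖ ^ k := by positivity
    have hB : (0:ℝ) < (1 + ‖x‖) ^ k := by positivity
    rw [Real.norm_of_nonneg (by positivity), Real.rpow_neg (by positivity),
      ← Real.inv_rpow (by positivity), Real.inv_rpow (by positivity)]
    exact stmt10_inv_le h1 hB (Real.rpow_pos_of_pos (by norm_num) k)
      (stmt10_pow_bound hk0 (norm_nonneg x))

lemma stmt10_split (k u v d : ℝ) (hk : 0 ≤ k) (hu : 0 ≤ u) (hv : 0 ≤ v) (hd : 0 ≤ d)
    (hduv : d ≤ u + v) :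
    (1 + u ^ k)⁻¹ * (1 + v ^ k)⁻¹ ≤ 2 ^ k * (1 + d ^ k)⁻¹ * ((1 + u ^ k)⁻¹ + (1 + v ^ k)⁻¹) := by
  have h2k : (0:ℝ) < 2 ^ k := Real.rpow_pos_of_pos (by norm_num) k
  have h2k1 : (1:ℝ) ≤ 2 ^ k := by
    simpa using Real.rpow_le_rpow_of_exponent_le (by norm_num : (1:ℝ) ≤ 2) hk
  have hUk : (0:ℝ) < 1 + u ^ k := by positivity
  have hVk : (0:ℝ) < 1 + v ^ k := by positivity
  have hDk : (0:ℝ) < 1 + d ^ k := by positivity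
  rcases le_total u v with h | h
  · have hd2 : d ^ k ≤ 2 ^ k * v ^ k := by
      rw [← Real.mul_rpow (by norm_num) hv]
      exact Real.rpow_le_rpow hd (by linarith) hk
    have key : (1 + v ^ k)⁻¹ ≤ 2 ^ k * (1 + d ^ k)⁻¹ := by
      apply stmt10_inv_le hVk hDk h2k
      nlinarith [Real.rpow_nonneg hv k]
    calc (1 + u ^ k)⁻¹ * (1 + v ^ k)⁻¹ ≤ (1 + u ^ k)⁻¹ * (2 ^ k * (1 + d ^ k)⁻¹) :=
          mul_le_mul_of_nonneg_left key (by positivity)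
        _ ≤ 2 ^ k * (1 + d ^ k)⁻¹ * ((1 + u ^ k)⁻¹ + (1 + v ^ k)⁻¹) := by
          nlinarith [inv_pos.mpr hUk, inv_pos.mpr hVk, inv_pos.mpr hDk]
  · have hd2 : d ^ k ≤ 2 ^ k * u ^ k := by
      rw [← Real.mul_rpow (by norm_num) hu]
      exact Real.rpow_le_rpow hd (by linarith) hk
    have key : (1 + u ^ k)⁻¹ ≤ 2 ^ k * (1 + d ^ k)⁻¹ := by
      apply stmt10_inv_le hUk hDk h2k
      nlinarith [Real.rpow_nonneg hu k]
    calc (1 + u ^ k)⁻¹ * (1 + v ^ k)⁻¹ ≤ (2 ^ k * (1 + d ^ k)⁻¹) * (1 + v ^ k)⁻¹ :=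
          mul_le_mul_of_nonneg_right key (by positivity)
        _ ≤ 2 ^ k * (1 + d ^ k)⁻¹ * ((1 + u ^ k)⁻¹ + (1 + v ^ k)⁻¹) := by
          nlinarith [inv_pos.mpr hUk, inv_pos.mpr hVk, inv_pos.mpr hDk]

theorem stmt10 (N : ℕ) (hN : 1 ≤ N) (s p C₁ C₂ : ℝ) (hs : 0 < s) (hs1 : s < 1)
    (hp : 1 < p) (hpN : (N : ℝ) < ((N : ℝ) + 2 * s) * p) (hC₁ : 0 < C₁) (hC₁₂ : C₁ ≤ C₂)
    (U : EuclideanSpace ℝ (Fin N) → ℝ) (hcont : Continuous U) (hpos : ∀ x, 0 < U x)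
    (hU : ∀ x, C₁ / (1 + ‖x‖ ^ ((N : ℝ) + 2 * s)) ≤ U x ∧
      U x ≤ C₂ / (1 + ‖x‖ ^ ((N : ℝ) + 2 * s))) :
    ∃ c C : ℝ, 0 < c ∧ c ≤ C ∧ ∀ a b : EuclideanSpace ℝ (Fin N), 2 ≤ ‖a - b‖ →
      c * ‖a - b‖ ^ (-((N : ℝ) + 2 * s)) ≤ (∫ x, U (x - a) ^ p * U (x - b)) ∧
      (∫ x, U (x - a) ^ p * U (x - b)) ≤ C * ‖a - b‖ ^ (-((N : ℝ) + 2 * s)) := by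
  set k : ℝ := (N : ℝ) + 2 * s with hkdef
  have hk0 : 0 < k := by positivity
  have hkN : (N : ℝ) < k := by simp only [hkdef]; linarith
  have hp0 : 0 < p := lt_trans one_pos hp
  have hC₂ : 0 < C₂ := lt_of_lt_of_le hC₁ hC₁₂
  set g : EuclideanSpace ℝ (Fin N) → ℝ := fun x => (1 + ‖x‖ ^ k)⁻¹ with hgdef
  have hgpos : ∀ x : EuclideanSpace ℝ (Fin N), 0 < g x := fun x => by positivity
  have hg1 : ∀ x : EuclideanSpace ℝ (Fin N), g x ≤ 1 := fun x => by
    rw [hgdef]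
    simp only
    rw [inv_le_one₀ (by positivity)]
    nlinarith [Real.rpow_nonneg (norm_nonneg x) k]
  have hUub : ∀ x : EuclideanSpace ℝ (Fin N), U x ≤ C₂ * g x := fun x => by
    have := (hU x).2; rwa [div_eq_mul_inv] at this
  have hUlb : ∀ x : EuclideanSpace ℝ (Fin N), C₁ * g x ≤ U x := fun x => by
    have := (hU x).1; rwa [div_eq_mul_inv] at this
  have hI : Integrable g := stmt10_integrable N k hkN
  set I : ℝ := ∫ x : EuclideanSpace ℝ (Fin N), g x with hIdef
  have hI0 : 0 ≤ I := integral_nonneg fun x => (hgpos x).le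
  set V : ℝ := (volume (Metric.ball (0 : EuclideanSpace ℝ (Fin N)) 1)).toReal with hVdef
  have hV0 : 0 < V := ENNReal.toReal_pos (Metric.measure_ball_pos volume 0 one_pos).ne'
    measure_ball_lt_top.ne
  have h2k : (0:ℝ) < 2 ^ k := Real.rpow_pos_of_pos (by norm_num) k
  set K0 : ℝ := (C₁ / 2) ^ p * (C₁ * (1 + (3/2:ℝ) ^ k)⁻¹) with hK0def
  have hK0pos : 0 < K0 := by
    have h32 : (0:ℝ) < (3/2:ℝ) ^ k := Real.rpow_pos_of_pos (by norm_num) k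
    have h12 : (0:ℝ) < (C₁/2) ^ p := Real.rpow_pos_of_pos (by positivity) p
    have : (0:ℝ) < (1 + (3/2:ℝ) ^ k)⁻¹ := by positivity
    exact mul_pos h12 (mul_pos hC₁ this)
  set K1 : ℝ := C₂ ^ p * C₂ * (2 ^ k * (2 * I)) with hK1def
  refine ⟨K0 * V, max (K0 * V) K1, mul_pos hK0pos hV0, le_max_left _ _, fun a b hab => ?_⟩
  set d : ℝ := ‖a - b‖ with hddef
  have hd0 : (0:ℝ) < d := lt_of_lt_of_le two_pos hab
  have hd1 : (1:ℝ) ≤ d := by linarith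
  have hdk1 : (1:ℝ) ≤ d ^ k := by
    calc (1:ℝ) = 1 ^ k := (Real.one_rpow k).symm
      _ ≤ d ^ k := Real.rpow_le_rpow zero_le_one hd1 hk0.le
  have hdkpos : (0:ℝ) < d ^ k := by positivity
  have hdneg : d ^ (-k) = (d ^ k)⁻¹ := Real.rpow_neg hd0.le k
  set f : EuclideanSpace ℝ (Fin N) → ℝ := fun x => U (x - a) ^ p * U (x - b) with hfdef
  have hfpos : ∀ x, 0 < f x := fun x =>
    mul_pos (Real.rpow_pos_of_pos (hpos _) p) (hpos _)
  -- pointwise upper bound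
  have hfub : ∀ x : EuclideanSpace ℝ (Fin N), f x ≤ C₂ ^ p * C₂ * (g (x - a) * g (x - b)) := by
    intro x
    have h1 : U (x - a) ^ p ≤ (C₂ * g (x - a)) ^ p :=
      Real.rpow_le_rpow (hpos _).le (hUub _) hp0.le
    have h2 : (C₂ * g (x - a)) ^ p = C₂ ^ p * g (x - a) ^ p :=
      Real.mul_rpow hC₂.le (hgpos _).le
    have h3 : g (x - a) ^ p ≤ g (x - a) := by
      calc g (x - a) ^ p ≤ g (x - a) ^ (1:ℝ) :=
            Real.rpow_le_rpow_of_exponent_ge (hgpos _) (hg1 _) hp.le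
        _ = g (x - a) := Real.rpow_one _
    have h4 : U (x - a) ^ p ≤ C₂ ^ p * g (x - a) := by
      calc U (x - a) ^ p ≤ (C₂ * g (x - a)) ^ p := h1
        _ = C₂ ^ p * g (x - a) ^ p := h2
        _ ≤ C₂ ^ p * g (x - a) :=
            mul_le_mul_of_nonneg_left h3 (Real.rpow_nonneg hC₂.le p)
    calc f x ≤ (C₂ ^ p * g (x - a)) * (C₂ * g (x - b)) := by
          apply mul_le_mul h4 (hUub _) (hpos _).le
          exact mul_nonneg (Real.rpow_nonneg hC₂.le p) (hgpos _).le
      _ = C₂ ^ p * C₂ * (g (x - a) * g (x - b)) := by ring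
  -- integrability of f
  have hIa : Integrable (fun x : EuclideanSpace ℝ (Fin N) => g (x - a)) := hI.comp_sub_right a
  have hIb : Integrable (fun x : EuclideanSpace ℝ (Fin N) => g (x - b)) := hI.comp_sub_right b
  have hfc : Continuous f := by
    apply Continuous.mul
    · exact (hcont.comp (continuous_id.sub continuous_const)).rpow_const
        (fun x => Or.inr hp0.le)
    · exact hcont.comp (continuous_id.sub continuous_const)
  have hint : Integrable f := by
    refine (hIa.const_mul (C₂ ^ p * C₂)).mono' hfc.aestronglyMeasurable ?_
    filter_upwards with x
    rw [Real.norm_of_nonneg (hfpos x).le]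
    calc f x ≤ C₂ ^ p * C₂ * (g (x - a) * g (x - b)) := hfub x
      _ ≤ C₂ ^ p * C₂ * (g (x - a) * 1) := by
          apply mul_le_mul_of_nonneg_left _ (mul_nonneg (Real.rpow_nonneg hC₂.le p) hC₂.le)
          exact mul_le_mul_of_nonneg_left (hg1 _) (hgpos _).le
      _ = C₂ ^ p * C₂ * g (x - a) := by ring
  constructor
  · -- lower bound
    have hpt : ∀ x ∈ Metric.ball a 1, K0 * d ^ (-k) ≤ f x := by
      intro x hx
      rw [Metric.mem_ball, dist_eq_norm] at hx
      have hxa : ‖x - a‖ ^ k ≤ 1 := Real.rpow_le_one (norm_nonneg _) hx.le hk0.le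
      have h1 : C₁ / 2 ≤ U (x - a) := by
        have := hUlb (x - a)
        have hga : (2:ℝ)⁻¹ ≤ g (x - a) := by
          rw [hgdef]; simp only
          apply inv_anti₀ (by positivity)
          linarith
        nlinarith [hgpos (x - a)]
      have h2 : (C₁ / 2) ^ p ≤ U (x - a) ^ p :=
        Real.rpow_le_rpow (by positivity) h1 hp0.le
      have hxb : ‖x - b‖ ≤ 3/2 * d := by
        calc ‖x - b‖ = ‖(x - a) + (a - b)‖ := by abel_nf
          _ ≤ ‖x - a‖ + ‖a - b‖ := norm_add_le _ _
          _ ≤ 1 + d := by rw [← hddef]; linarith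
          _ ≤ 3/2 * d := by linarith
      have hxbk : ‖x - b‖ ^ k ≤ (3/2:ℝ) ^ k * d ^ k := by
        rw [← Real.mul_rpow (by norm_num) hd0.le]
        exact Real.rpow_le_rpow (norm_nonneg _) hxb hk0.le
      have h3 : C₁ * ((1 + (3/2:ℝ) ^ k)⁻¹ * (d ^ k)⁻¹) ≤ U (x - b) := by
        refine le_trans ?_ (hUlb (x - b))
        apply mul_le_mul_of_nonneg_left _ hC₁.le
        rw [← mul_inv]
        apply inv_anti₀ (by positivity)
        calc 1 + ‖x - b‖ ^ k ≤ 1 + (3/2:ℝ) ^ k * d ^ k := by linarith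
          _ ≤ d ^ k + (3/2:ℝ) ^ k * d ^ k := by linarith
          _ = (1 + (3/2:ℝ) ^ k) * d ^ k := by ring
      have hn1 : (0:ℝ) ≤ C₁ * ((1 + (3/2:ℝ) ^ k)⁻¹ * (d ^ k)⁻¹) := by
        have h32 : (0:ℝ) < (3/2:ℝ) ^ k := Real.rpow_pos_of_pos (by norm_num) k
        have := hdkpos
        have h1' : (0:ℝ) ≤ (1 + (3/2:ℝ) ^ k)⁻¹ := by positivity
        exact mul_nonneg hC₁.le (mul_nonneg h1' (inv_nonneg.mpr hdkpos.le))
      calc K0 * d ^ (-k) = (C₁/2) ^ p * (C₁ * ((1 + (3/2:ℝ) ^ k)⁻¹ * (d ^ k)⁻¹)) := by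
            rw [hdneg, hK0def]; ring
        _ ≤ U (x - a) ^ p * U (x - b) :=
            mul_le_mul h2 h3 hn1 (Real.rpow_nonneg (hpos _).le p)
        _ = f x := rfl
    have hball := setIntegral_ge_of_const_le_real Metric.isOpen_ball.measurableSet
      measure_ball_lt_top.ne hpt hint.integrableOn
    have hVol : (volume (Metric.ball a 1)).toReal = V := by
      rw [hVdef, Measure.addHaar_ball_center]
    rw [measureReal_def, hVol] at hball
    have hsub : (∫ x in Metric.ball a 1, f x) ≤ ∫ x, f x :=
      setIntegral_le_integral hint (Filter.Eventually.of_forall fun x => (hfpos x).le)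
    have hrw : K0 * V * d ^ (-k) = K0 * d ^ (-k) * V := by ring
    rw [hrw]
    exact le_trans hball hsub
  · -- upper bound
    have hC2p : (0:ℝ) ≤ C₂ ^ p * C₂ := mul_nonneg (Real.rpow_nonneg hC₂.le p) hC₂.le
    have hdk1' : (0:ℝ) < 1 + d ^ k := by linarith
    set M : ℝ := C₂ ^ p * C₂ * (2 ^ k * (1 + d ^ k)⁻¹) with hMdef
    have hM0 : 0 ≤ M := mul_nonneg hC2p (mul_nonneg h2k.le (inv_nonneg.mpr hdk1'.le))
    have hptu : ∀ x : EuclideanSpace ℝ (Fin N), f x ≤ M * (g (x - a) + g (x - b)) := by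
      intro x
      have hsplit := stmt10_split k ‖x - a‖ ‖x - b‖ d hk0.le (norm_nonneg _) (norm_nonneg _)
        hd0.le (by
          calc d = ‖(a - x) + (x - b)‖ := by rw [hddef]; abel_nf
            _ ≤ ‖a - x‖ + ‖x - b‖ := norm_add_le _ _
            _ = ‖x - a‖ + ‖x - b‖ := by rw [norm_sub_rev a x])
      calc f x ≤ C₂ ^ p * C₂ * (g (x - a) * g (x - b)) := hfub x
        _ ≤ C₂ ^ p * C₂ * (2 ^ k * (1 + d ^ k)⁻¹ * (g (x - a) + g (x - b))) :=
            mul_le_mul_of_nonneg_left hsplit hC2p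
        _ = M * (g (x - a) + g (x - b)) := by rw [hMdef]; ring
    have hRint : Integrable (fun x : EuclideanSpace ℝ (Fin N) => M * (g (x - a) + g (x - b))) :=
      (hIa.add hIb).const_mul M
    have hIub : (∫ x, f x) ≤ ∫ x, M * (g (x - a) + g (x - b)) :=
      integral_mono hint hRint hptu
    have hReval : (∫ x : EuclideanSpace ℝ (Fin N), M * (g (x - a) + g (x - b))) = M * (2 * I) := by
      rw [integral_const_mul, integral_add hIa hIb,
        integral_sub_right_eq_self g a, integral_sub_right_eq_self g b, ← hIdef]
      ring
    have hfinal : (∫ x, f x) ≤ K1 * d ^ (-k) := by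
      rw [hdneg]
      calc (∫ x, f x) ≤ M * (2 * I) := by rw [← hReval]; exact hIub
        _ = C₂ ^ p * C₂ * (2 ^ k * (2 * I)) * (1 + d ^ k)⁻¹ := by rw [hMdef]; ring
        _ ≤ C₂ ^ p * C₂ * (2 ^ k * (2 * I)) * (d ^ k)⁻¹ := by
            apply mul_le_mul_of_nonneg_left _
              (mul_nonneg hC2p (mul_nonneg h2k.le (by linarith)))
            exact inv_anti₀ hdkpos (by linarith)
        _ = K1 * (d ^ k)⁻¹ := by rw [hK1def]
    calc (∫ x, f x) ≤ K1 * d ^ (-k) := hfinal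
      _ ≤ max (K0 * V) K1 * d ^ (-k) := by
          apply mul_le_mul_of_nonneg_right (le_max_right _ _) (Real.rpow_nonneg hd0.le _)
end

section
/- Let 0 < s < 1, N ≥ 1, and let K be continuous on ℝ^N with K(x) = K₀ − a/|x|^m + O(|x|^{−m−θ}) as |x| → ∞, where K₀ = 1, a > 0, θ > 0, 0 < m < N + 2s. Suppose U : ℝ^N → ℝ satisfies C₁/(1+|x|^{N+2s}) ≤ U(x) ≤ C₂/(1+|x|^{N+2s}) and U ∈ L^{p+1}(ℝ^N) with (N+2s)(p+1) − N > N + 2s. Then there exist B₁' > 0 and τ > 0 such that for any x¹ ∈ ℝ^N with |x¹| = r large, ∫_{ℝ^N} K(x) U(x − x¹)^{p+1} dx = ∫_{ℝ^N} U^{p+1} − B₁'/r^m + O(r^{−m−τ}), with B₁' = a ∫_{ℝ^N} U^{p+1} (in leading order, B₁' equals a ∫ U^{p+1} up to the moment correction), where the error is uniform in the direction of x¹. -/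
open Real MeasureTheory

lemma aux_mvt (m c : ℝ) (hm : 0 < m) (hc : 0 < c) {A B : ℝ} (hA : c ≤ A) (hB : c ≤ B) :
    |A ^ (-m) - B ^ (-m)| ≤ m * c ^ (-m - 1) * |A - B| := by
  have key := Convex.norm_image_sub_le_of_norm_hasDerivWithin_le
    (f := fun t : ℝ => t ^ (-m)) (f' := fun t : ℝ => -m * t ^ (-m - 1))
    (s := Set.Ici c) (C := m * c ^ (-m - 1)) ?_ ?_ (convex_Ici c) hB hA
  · simpa [Real.norm_eq_abs] using key
  · intro t ht
    have ht0 : (0:ℝ) < t := lt_of_lt_of_le hc ht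
    have := (Real.hasDerivAt_rpow_const (x := t) (p := -m) (Or.inl ht0.ne')).hasDerivWithinAt
      (s := Set.Ici c)
    simpa using this
  · intro t ht
    have ht0 : (0:ℝ) < t := lt_of_lt_of_le hc ht
    have h1 : t ^ (-m - 1) ≤ c ^ (-m - 1) :=
      Real.rpow_le_rpow_of_nonpos hc ht (by linarith)
    have h2 : (0:ℝ) ≤ t ^ (-m - 1) := Real.rpow_nonneg ht0.le _
    rw [Real.norm_eq_abs, abs_mul, abs_neg, abs_of_pos hm, abs_of_nonneg h2]
    exact mul_le_mul_of_nonneg_left h1 hm.le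

lemma aux_one_add_pow (b t : ℝ) (hb : 0 ≤ b) (ht : 0 ≤ t) :
    (1 + t) ^ b ≤ 2 ^ b * (1 + t ^ b) := by
  have h1 : (1 + t) ≤ 2 * max 1 t := by
    rcases le_total t 1 with h | h
    · rw [max_eq_left h]; linarith
    · rw [max_eq_right h]; linarith
  calc (1 + t) ^ b ≤ (2 * max 1 t) ^ b := Real.rpow_le_rpow (by linarith) h1 hb
    _ = 2 ^ b * (max 1 t) ^ b := Real.mul_rpow (by norm_num) (le_max_of_le_left zero_le_one)
    _ ≤ 2 ^ b * (1 + t ^ b) := by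
        apply mul_le_mul_of_nonneg_left _ (Real.rpow_nonneg (by norm_num) b)
        rcases le_total t 1 with h | h
        · rw [max_eq_left h, Real.one_rpow]
          nlinarith [Real.rpow_nonneg ht b]
        · rw [max_eq_right h]; linarith

lemma aux_int (N : ℕ) (b p C₂ β : ℝ) (hb : 0 ≤ b) (hp : 0 ≤ p + 1) (hC₂ : 0 ≤ C₂)
    (hβ : 0 ≤ β) (hq : (N : ℝ) < b * (p + 1) - β)
    (U : EuclideanSpace ℝ (Fin N) → ℝ) (hU0 : ∀ x, 0 ≤ U x)
    (hU : ∀ x, U x ≤ C₂ / (1 + ‖x‖ ^ b))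
    (hUint : Integrable (fun x => U x ^ (p + 1))) :
    Integrable (fun x => ‖x‖ ^ β * U x ^ (p + 1)) := by
  set q : ℝ := b * (p + 1) with hqdef
  have hdim : (Module.finrank ℝ (EuclideanSpace ℝ (Fin N)) : ℝ) < q - β := by
    rw [finrank_euclideanSpace_fin]; linarith
  have hmain : ∀ x : EuclideanSpace ℝ (Fin N),
      ‖x‖ ^ β * U x ^ (p + 1) ≤ (C₂ ^ (p + 1) * 2 ^ q) * (1 + ‖x‖) ^ (-(q - β)) := by
    intro x
    set t : ℝ := ‖x‖ with htdef
    have ht : 0 ≤ t := norm_nonneg x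
    have ht1 : (0:ℝ) < 1 + t := by linarith
    have hden : (0:ℝ) < 1 + t ^ b := by positivity
    have h1 : U x ^ (p + 1) ≤ C₂ ^ (p + 1) / (1 + t ^ b) ^ (p + 1) := by
      rw [← Real.div_rpow hC₂ hden.le]
      exact Real.rpow_le_rpow (hU0 x) (hU x) hp
    have h3 : (1 + t) ^ q ≤ 2 ^ q * (1 + t ^ b) ^ (p + 1) := by
      calc (1 + t) ^ q = ((1 + t) ^ b) ^ (p + 1) := Real.rpow_mul ht1.le _ _
        _ ≤ (2 ^ b * (1 + t ^ b)) ^ (p + 1) :=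
            Real.rpow_le_rpow (Real.rpow_nonneg ht1.le b) (aux_one_add_pow b t hb ht) hp
        _ = (2 ^ b) ^ (p + 1) * (1 + t ^ b) ^ (p + 1) :=
            Real.mul_rpow (Real.rpow_nonneg (by norm_num) b) hden.le
        _ = 2 ^ q * (1 + t ^ b) ^ (p + 1) := by rw [← Real.rpow_mul (by norm_num : (0:ℝ) ≤ 2)]
    have hpow : (0:ℝ) < (1 + t ^ b) ^ (p + 1) := Real.rpow_pos_of_pos hden _
    have hq1 : (0:ℝ) < (1 + t) ^ q := Real.rpow_pos_of_pos ht1 _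
    have h4 : C₂ ^ (p + 1) / (1 + t ^ b) ^ (p + 1) ≤ C₂ ^ (p + 1) * 2 ^ q / (1 + t) ^ q := by
      rw [div_le_div_iff₀ hpow hq1]
      have hC2p : (0:ℝ) ≤ C₂ ^ (p + 1) := Real.rpow_nonneg hC₂ _
      nlinarith [mul_le_mul_of_nonneg_left h3 hC2p]
    have h5 : t ^ β ≤ (1 + t) ^ β := Real.rpow_le_rpow ht (by linarith) hβ
    have hUp : (0:ℝ) ≤ U x ^ (p + 1) := Real.rpow_nonneg (hU0 x) _
    calc t ^ β * U x ^ (p + 1)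
        ≤ (1 + t) ^ β * (C₂ ^ (p + 1) * 2 ^ q / (1 + t) ^ q) := by
          apply mul_le_mul h5 (h1.trans h4) hUp (Real.rpow_nonneg ht1.le _)
      _ = (C₂ ^ (p + 1) * 2 ^ q) * (1 + t) ^ (-(q - β)) := by
          rw [Real.rpow_neg ht1.le, div_eq_mul_inv, ← Real.rpow_neg ht1.le,
            ← Real.rpow_neg ht1.le]
          rw [mul_comm ((1+t)^β), mul_assoc, ← Real.rpow_add ht1]
          ring_nf
  have hmeas : AEStronglyMeasurable (fun x : EuclideanSpace ℝ (Fin N) =>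
      ‖x‖ ^ β * U x ^ (p + 1)) volume :=
    ((continuous_norm.rpow_const fun x => Or.inr hβ).aestronglyMeasurable).mul
      hUint.aestronglyMeasurable
  apply Integrable.mono' ((integrable_one_add_norm hdim).const_mul (C₂ ^ (p + 1) * 2 ^ q)) hmeas
  filter_upwards with x
  rw [Real.norm_eq_abs, abs_of_nonneg (mul_nonneg (Real.rpow_nonneg (norm_nonneg x) _)
    (Real.rpow_nonneg (hU0 x) _))]
  exact hmain x

set_option maxHeartbeats 1000000 in
theorem stmt14 (N : ℕ) (hN : 1 ≤ N) (s a θ m p C₁ C₂ C_K : ℝ)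
    (hs : 0 < s) (hs1 : s < 1) (ha : 0 < a) (hθ : 0 < θ)
    (hm0 : 0 < m) (hm : m < (N : ℝ) + 2 * s) (hp : 1 < p)
    (hpexp : (N : ℝ) + 2 * s < ((N : ℝ) + 2 * s) * (p + 1) - N)
    (hC₁ : 0 < C₁) (hC₁₂ : C₁ ≤ C₂) (hCK : 0 < C_K)
    (K : EuclideanSpace ℝ (Fin N) → ℝ) (hKcont : Continuous K)
    (hK : ∀ x : EuclideanSpace ℝ (Fin N), 1 ≤ ‖x‖ →
      |K x - 1 + a / ‖x‖ ^ m| ≤ C_K / ‖x‖ ^ (m + θ))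
    (U : EuclideanSpace ℝ (Fin N) → ℝ)
    (hU : ∀ x, C₁ / (1 + ‖x‖ ^ ((N : ℝ) + 2 * s)) ≤ U x ∧
      U x ≤ C₂ / (1 + ‖x‖ ^ ((N : ℝ) + 2 * s)))
    (hUint : Integrable (fun x => U x ^ (p + 1))) :
    ∃ B₁' : ℝ, 0 < B₁' ∧ B₁' = a * (∫ x, U x ^ (p + 1)) ∧
      ∃ τ > (0 : ℝ), ∃ C > (0 : ℝ), ∃ R₀ > (0 : ℝ),
        ∀ x₁ : EuclideanSpace ℝ (Fin N), R₀ ≤ ‖x₁‖ →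
          |(∫ x, K x * U (x - x₁) ^ (p + 1)) - (∫ x, U x ^ (p + 1)) + B₁' / ‖x₁‖ ^ m| ≤
            C * ‖x₁‖ ^ (-m - τ) := by
  set b : ℝ := (N : ℝ) + 2 * s with hbdef
  set q : ℝ := b * (p + 1) with hqdef
  have hN1 : (1 : ℝ) ≤ (N : ℝ) := by exact_mod_cast hN
  have hb0 : 0 < b := by rw [hbdef]; linarith
  have hb1 : 1 ≤ b := by rw [hbdef]; linarith
  have hqN : (N : ℝ) + b < q := by linarith [hpexp]
  have hUpos : ∀ x, 0 < U x := fun x =>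
    lt_of_lt_of_le (div_pos hC₁ (by positivity)) (hU x).1
  have hUnn : ∀ x, 0 ≤ U x := fun x => (hUpos x).le
  have hUp_nn : ∀ x, 0 ≤ U x ^ (p + 1) := fun x => Real.rpow_nonneg (hUnn x) _
  set I₀ : ℝ := ∫ x, U x ^ (p + 1) with hI₀def
  have hI₀pos : 0 < I₀ := by
    rw [hI₀def, integral_pos_iff_support_of_nonneg hUp_nn hUint]
    have : Function.support (fun x : EuclideanSpace ℝ (Fin N) => U x ^ (p + 1)) = Set.univ := by
      ext x; simp [Function.mem_support, (Real.rpow_pos_of_pos (hUpos x) (p + 1)).ne']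
    rw [this]
    exact IsOpen.measure_pos volume isOpen_univ Set.univ_nonempty
  -- τ
  set τ : ℝ := min (min θ 1) ((q - N - m) / 2) with hτdef
  have hqNm : 0 < q - N - m := by linarith
  have hτ0 : 0 < τ := by
    apply lt_min (lt_min hθ one_pos); linarith
  have hτθ : τ ≤ θ := le_trans (min_le_left _ _) (min_le_left _ _)
  have hτ1 : τ ≤ 1 := le_trans (min_le_left _ _) (min_le_right _ _)
  have hτq : (N : ℝ) < q - (m + τ) := by
    have : τ ≤ (q - N - m) / 2 := min_le_right _ _
    linarith
  -- integrals I₁, I₂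
  have hI₁int : Integrable (fun x : EuclideanSpace ℝ (Fin N) => ‖x‖ ^ (1:ℝ) * U x ^ (p + 1)) := by
    apply aux_int N b p C₂ 1 hb0.le (by linarith) (by linarith) zero_le_one
      (by show (N:ℝ) < q - 1; linarith) U hUnn (fun x => (hU x).2) hUint
  have hI₂int : Integrable (fun x : EuclideanSpace ℝ (Fin N) => ‖x‖ ^ (m + τ) * U x ^ (p + 1)) := by
    apply aux_int N b p C₂ (m + τ) hb0.le (by linarith) (by linarith) (by linarith)
      (by show (N:ℝ) < q - (m + τ); linarith) U hUnn (fun x => (hU x).2) hUint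
  set I₁ : ℝ := ∫ x, ‖x‖ ^ (1:ℝ) * U x ^ (p + 1) with hI₁def
  set I₂ : ℝ := ∫ x, ‖x‖ ^ (m + τ) * U x ^ (p + 1) with hI₂def
  have hI₁nn : 0 ≤ I₁ := integral_nonneg fun x =>
    mul_nonneg (Real.rpow_nonneg (norm_nonneg _) _) (hUp_nn x)
  have hI₂nn : 0 ≤ I₂ := integral_nonneg fun x =>
    mul_nonneg (Real.rpow_nonneg (norm_nonneg _) _) (hUp_nn x)
  -- global bound on K
  obtain ⟨M₀, hM₀⟩ := (isCompact_closedBall (0 : EuclideanSpace ℝ (Fin N)) 1).exists_bound_of_continuousOn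
    hKcont.continuousOn
  set M : ℝ := max M₀ (1 + a + C_K) with hMdef
  have hMpos : 0 < M := lt_of_lt_of_le (by linarith) (le_max_right _ _)
  have hMK : ∀ y, |K y| ≤ M := by
    intro y
    by_cases hy : ‖y‖ ≤ 1
    · exact le_trans (hM₀ y (mem_closedBall_zero_iff.2 hy)) (le_max_left _ _)
    · push_neg at hy
      have h1 : (1:ℝ) ≤ ‖y‖ := hy.le
      have hKb := hK y h1
      have hym : (1:ℝ) ≤ ‖y‖ ^ m := Real.one_le_rpow h1 hm0.le
      have hymθ : (1:ℝ) ≤ ‖y‖ ^ (m + θ) := Real.one_le_rpow h1 (by linarith)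
      have h2 : a / ‖y‖ ^ m ≤ a := div_le_self ha.le hym
      have h3 : C_K / ‖y‖ ^ (m + θ) ≤ C_K := div_le_self hCK.le hymθ
      have h4 : 0 ≤ a / ‖y‖ ^ m := div_nonneg ha.le (by positivity)
      have : |K y| ≤ |K y - 1 + a / ‖y‖ ^ m| + |1 - a / ‖y‖ ^ m| := by
        have := abs_add_le (K y - 1 + a / ‖y‖ ^ m) (1 - a / ‖y‖ ^ m)
        simpa using this
      have h5 : |1 - a / ‖y‖ ^ m| ≤ 1 + a / ‖y‖ ^ m :=
        abs_le.2 ⟨by linarith, by linarith⟩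
      refine le_trans this (le_trans (by linarith) (le_max_right _ _))
  set C' : ℝ := M + 1 + a with hC'def
  have hC'pos : 0 < C' := by rw [hC'def]; linarith
  -- the constant
  set C : ℝ := C_K * 2 ^ (m + θ) * I₀ + a * m * 2 ^ (m + 1) * I₁ + C' * 2 ^ (m + τ) * I₂
    with hCdef
  have hCpos : 0 < C := by
    have t1 : 0 < C_K * 2 ^ (m + θ) * I₀ := by positivity
    have t2 : 0 ≤ a * m * 2 ^ (m + 1) * I₁ := by positivity
    have t3 : 0 ≤ C' * 2 ^ (m + τ) * I₂ := by positivity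
    linarith
  refine ⟨a * I₀, by positivity, rfl, τ, hτ0, C, hCpos, 2, by norm_num, ?_⟩
  intro x₁ hr2
  set r : ℝ := ‖x₁‖ with hrdef
  have hr1 : (1:ℝ) ≤ r := by linarith
  have hr0 : (0:ℝ) < r := by linarith
  have hc0 : (0:ℝ) < r / 2 := by linarith
  have hc1 : (1:ℝ) ≤ r / 2 := by linarith
  -- translation
  set g : EuclideanSpace ℝ (Fin N) → ℝ :=
    fun x => (K (x + x₁) - 1 + a * r ^ (-m)) * U x ^ (p + 1) with hgdef
  have hKtint : Integrable (fun x : EuclideanSpace ℝ (Fin N) => K (x + x₁) * U x ^ (p + 1)) := by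
    apply Integrable.bdd_mul (c := M) hUint
      ((hKcont.comp (continuous_add_right x₁)).aestronglyMeasurable)
    exact ae_of_all _ (fun x => by rw [Real.norm_eq_abs]; exact hMK _)
  have hgint : Integrable g := by
    have : g = fun x => (fun x => K (x + x₁) * U x ^ (p + 1)) x
        - (fun x => U x ^ (p + 1)) x + (fun x => (a * r ^ (-m)) * U x ^ (p + 1)) x := by
      funext x; dsimp [hgdef]; ring
    rw [this]
    exact (hKtint.sub hUint).add (hUint.const_mul _)
  have htrans : (∫ x, K x * U (x - x₁) ^ (p + 1)) = ∫ x, K (x + x₁) * U x ^ (p + 1) := by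
    have h := MeasureTheory.integral_add_right_eq_self (μ := volume)
      (fun x => K x * U (x - x₁) ^ (p + 1)) x₁
    simp only [add_sub_cancel_right] at h
    exact h.symm
  have hsplit : ∫ x, g x = (∫ x, K (x + x₁) * U x ^ (p + 1)) - I₀ + a * r ^ (-m) * I₀ := by
    have e : g = fun x => K (x + x₁) * U x ^ (p + 1)
        - (1 - a * r ^ (-m)) * U x ^ (p + 1) := by
      funext x; simp only [hgdef]; ring
    rw [e, integral_sub hKtint (hUint.const_mul _), integral_const_mul, ← hI₀def]
    ring
  have hval : (∫ x, K x * U (x - x₁) ^ (p + 1)) - I₀ + (a * I₀) / r ^ m = ∫ x, g x := by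
    rw [hsplit, htrans, Real.rpow_neg hr0.le, div_eq_mul_inv]; ring
  rw [hval]
  -- pointwise bound
  set φ : EuclideanSpace ℝ (Fin N) → ℝ := fun x =>
    C_K * (r / 2) ^ (-(m + θ)) * U x ^ (p + 1)
    + a * m * (r / 2) ^ (-m - 1) * (‖x‖ ^ (1:ℝ) * U x ^ (p + 1))
    + C' * 2 ^ (m + τ) * r ^ (-(m + τ)) * (‖x‖ ^ (m + τ) * U x ^ (p + 1)) with hφdef
  have hφint : Integrable φ := by
    exact ((hUint.const_mul _).add (hI₁int.const_mul _)).add (hI₂int.const_mul _)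
  have hpt : ∀ x, ‖g x‖ ≤ φ x := by
    intro x
    have hUx : 0 ≤ U x ^ (p + 1) := hUp_nn x
    rw [hgdef]
    dsimp only
    rw [Real.norm_eq_abs, abs_mul, abs_of_nonneg hUx]
    by_cases hx : ‖x‖ ≤ r / 2
    · -- inner region
      have hAx : r / 2 ≤ ‖x + x₁‖ := by
        have h := norm_add_le (-x) (x + x₁)
        simp only [norm_neg, neg_add_cancel_left] at h
        -- h : ‖x₁‖ ≤ ‖x‖ + ‖x + x₁‖
        linarith
      have h1x : (1:ℝ) ≤ ‖x + x₁‖ := le_trans hc1 hAx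
      have hxx0 : (0:ℝ) < ‖x + x₁‖ := by linarith
      have hKb := hK (x + x₁) h1x
      have e1 : a / ‖x + x₁‖ ^ m = a * ‖x + x₁‖ ^ (-m) := by
        rw [Real.rpow_neg (by positivity), div_eq_mul_inv]
      have e2 : C_K / ‖x + x₁‖ ^ (m + θ) = C_K * ‖x + x₁‖ ^ (-(m + θ)) := by
        rw [Real.rpow_neg (by positivity), div_eq_mul_inv]
      have hstep1 : |K (x + x₁) - 1 + a * r ^ (-m)|
          ≤ C_K * ‖x + x₁‖ ^ (-(m + θ)) + a * |‖x + x₁‖ ^ (-m) - r ^ (-m)| := by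
        have : K (x + x₁) - 1 + a * r ^ (-m)
            = (K (x + x₁) - 1 + a / ‖x + x₁‖ ^ m) + a * (r ^ (-m) - ‖x + x₁‖ ^ (-m)) := by
          rw [e1]; ring
        rw [this]
        refine (abs_add_le _ _).trans ?_
        rw [abs_mul, abs_of_pos ha, abs_sub_comm]
        exact add_le_add (hKb.trans_eq e2) le_rfl
      have hstep2 : ‖x + x₁‖ ^ (-(m + θ)) ≤ (r / 2) ^ (-(m + θ)) :=
        Real.rpow_le_rpow_of_nonpos hc0 hAx (by linarith)
      have hstep3 : |‖x + x₁‖ ^ (-m) - r ^ (-m)| ≤ m * (r / 2) ^ (-m - 1) * ‖x‖ := by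
        have hmvt := aux_mvt m (r / 2) hm0 hc0 hAx (by linarith : r / 2 ≤ r)
        refine hmvt.trans ?_
        have : |‖x + x₁‖ - r| ≤ ‖x‖ := by
          have := abs_norm_sub_norm_le (x + x₁) x₁
          simpa using this
        exact mul_le_mul_of_nonneg_left this (by positivity)
      have hbr : |K (x + x₁) - 1 + a * r ^ (-m)|
          ≤ C_K * (r / 2) ^ (-(m + θ)) + a * m * (r / 2) ^ (-m - 1) * ‖x‖ := by
        refine hstep1.trans ?_
        have h2 := mul_le_mul_of_nonneg_left hstep2 hCK.le
        have h3 := mul_le_mul_of_nonneg_left hstep3 ha.le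
        linarith
      have := mul_le_mul_of_nonneg_right hbr hUx
      simp only [hφdef]
      have hthird : 0 ≤ C' * 2 ^ (m + τ) * r ^ (-(m + τ)) * (‖x‖ ^ (m + τ) * U x ^ (p + 1)) := by
        positivity
      rw [Real.rpow_one]
      have e : (C_K * (r / 2) ^ (-(m + θ)) + a * m * (r / 2) ^ (-m - 1) * ‖x‖) * U x ^ (p + 1)
          = C_K * (r / 2) ^ (-(m + θ)) * U x ^ (p + 1)
            + a * m * (r / 2) ^ (-m - 1) * (‖x‖ * U x ^ (p + 1)) := by ring
      rw [e] at this
      exact this.trans (le_add_of_nonneg_right hthird)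
    · -- outer region
      push_neg at hx
      have hxn : (0:ℝ) < ‖x‖ := by linarith
      have hb1' : |K (x + x₁) - 1 + a * r ^ (-m)| ≤ C' := by
        have h1 : |K (x + x₁)| ≤ M := hMK _
        have h2 : a * r ^ (-m) ≤ a := by
          have : r ^ (-m) ≤ 1 := Real.rpow_le_one_of_one_le_of_nonpos hr1 (by linarith)
          nlinarith
        have h3 : 0 ≤ a * r ^ (-m) := by positivity
        have h5 := abs_add_le (K (x + x₁) - 1) (a * r ^ (-m))
        have h6 := abs_le.1 h1
        have h4 : |K (x + x₁) - 1| ≤ M + 1 :=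
          abs_le.2 ⟨by linarith [h6.1], by linarith [h6.2]⟩
        rw [abs_of_nonneg h3] at h5
        have : |K (x + x₁) - 1 + a * r ^ (-m)| ≤ M + 1 + a := by linarith
        exact this.trans_eq hC'def.symm
      have hgeo : (1:ℝ) ≤ 2 ^ (m + τ) * r ^ (-(m + τ)) * ‖x‖ ^ (m + τ) := by
        have hbase : (1:ℝ) ≤ 2 * r⁻¹ * ‖x‖ := by
          rw [mul_comm 2 r⁻¹, mul_assoc, ← div_eq_inv_mul]
          rw [le_div_iff₀ hr0]
          linarith
        have h0 : (0:ℝ) ≤ 2 * r⁻¹ := by positivity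
        calc (1:ℝ) ≤ (2 * r⁻¹ * ‖x‖) ^ (m + τ) := Real.one_le_rpow hbase (by linarith)
          _ = 2 ^ (m + τ) * r ^ (-(m + τ)) * ‖x‖ ^ (m + τ) := by
            rw [Real.mul_rpow h0 (norm_nonneg x), Real.mul_rpow (by norm_num) (by positivity),
              Real.inv_rpow hr0.le, ← Real.rpow_neg hr0.le]
      have hbr : |K (x + x₁) - 1 + a * r ^ (-m)|
          ≤ C' * (2 ^ (m + τ) * r ^ (-(m + τ)) * ‖x‖ ^ (m + τ)) :=
        hb1'.trans (le_mul_of_one_le_right hC'pos.le hgeo)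
      have := mul_le_mul_of_nonneg_right hbr hUx
      simp only [hφdef]
      have h1 : 0 ≤ C_K * (r / 2) ^ (-(m + θ)) * U x ^ (p + 1) := by positivity
      have h2 : 0 ≤ a * m * (r / 2) ^ (-m - 1) * (‖x‖ ^ (1:ℝ) * U x ^ (p + 1)) := by positivity
      have e : C' * (2 ^ (m + τ) * r ^ (-(m + τ)) * ‖x‖ ^ (m + τ)) * U x ^ (p + 1)
          = C' * 2 ^ (m + τ) * r ^ (-(m + τ)) * (‖x‖ ^ (m + τ) * U x ^ (p + 1)) := by ring
      rw [e] at this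
      exact this.trans (le_add_of_nonneg_left (add_nonneg h1 h2))
  -- integrate
  have hbound : |∫ x, g x| ≤ ∫ x, φ x := by
    rw [← Real.norm_eq_abs]
    exact norm_integral_le_of_norm_le hφint (ae_of_all _ hpt)
  have hφval : ∫ x, φ x = C_K * (r / 2) ^ (-(m + θ)) * I₀
      + a * m * (r / 2) ^ (-m - 1) * I₁ + C' * 2 ^ (m + τ) * r ^ (-(m + τ)) * I₂ := by
    have hint1 : Integrable (fun x : EuclideanSpace ℝ (Fin N) =>
        C_K * (r / 2) ^ (-(m + θ)) * U x ^ (p + 1)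
        + a * m * (r / 2) ^ (-m - 1) * (‖x‖ ^ (1:ℝ) * U x ^ (p + 1))) :=
      (hUint.const_mul _).add (hI₁int.const_mul _)
    simp only [hφdef]
    rw [integral_add hint1 (hI₂int.const_mul _),
      integral_add (hUint.const_mul _) (hI₁int.const_mul _),
      integral_const_mul, integral_const_mul, integral_const_mul, ← hI₀def, ← hI₁def, ← hI₂def]
  -- final exponent comparisons
  have key2 : ∀ z : ℝ, (r / 2) ^ (-z) = 2 ^ z * r ^ (-z) := by
    intro z
    rw [div_eq_mul_inv, Real.mul_rpow hr0.le (by norm_num),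
      Real.inv_rpow (by norm_num : (0:ℝ) ≤ 2), Real.rpow_neg (by norm_num : (0:ℝ) ≤ 2) z,
      inv_inv]
    ring
  have hfin1 : (r / 2) ^ (-(m + θ)) ≤ 2 ^ (m + θ) * r ^ (-(m + τ)) := by
    rw [key2]
    exact mul_le_mul_of_nonneg_left
      (Real.rpow_le_rpow_of_exponent_le hr1 (by linarith)) (by positivity)
  have hfin2 : (r / 2) ^ (-m - 1) ≤ 2 ^ (m + 1) * r ^ (-(m + τ)) := by
    have e : (-m - 1 : ℝ) = -(m + 1) := by ring
    rw [e, key2]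
    exact mul_le_mul_of_nonneg_left
      (Real.rpow_le_rpow_of_exponent_le hr1 (by linarith)) (by positivity)
  have hfinal : ∫ x, φ x ≤ C * r ^ (-m - τ) := by
    rw [hφval]
    have e : (-m - τ : ℝ) = -(m + τ) := by ring
    rw [e, hCdef]
    have t1 : C_K * (r / 2) ^ (-(m + θ)) * I₀ ≤ C_K * 2 ^ (m + θ) * I₀ * r ^ (-(m + τ)) := by
      have := mul_le_mul_of_nonneg_right (mul_le_mul_of_nonneg_left hfin1 hCK.le) hI₀pos.le
      linarith
    have t2 : a * m * (r / 2) ^ (-m - 1) * I₁ ≤ a * m * 2 ^ (m + 1) * I₁ * r ^ (-(m + τ)) := by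
      have := mul_le_mul_of_nonneg_right
        (mul_le_mul_of_nonneg_left hfin2 (by positivity : (0:ℝ) ≤ a * m)) hI₁nn
      linarith
    have t3 : C' * 2 ^ (m + τ) * r ^ (-(m + τ)) * I₂
        = C' * 2 ^ (m + τ) * I₂ * r ^ (-(m + τ)) := by ring
    linarith [t1, t2]
  exact hbound.trans hfinal
end
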